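/- arXiv:math/0310036 — 5 statements merged into one kernel-verified Lean document; each statement's English description precedes it below -/
import Mathlib

section
/- Let R = ℚ[y₀, …, y_r] and S = ℚ[z₁, …, z_r], fix 1 ≤ d ≤ r and nonzero rationals m₀, m₁, …, m_d. Then there is at most one ℚ-linear map π̃ : R → S satisfying: (A) π̃(yᵢ f) = zᵢ π̃(f) for i > d; (B) π̃(yᵢ f) = (mᵢ/mⱼ) π̃(yⱼ f) + (zᵢ − (mᵢ/mⱼ) zⱼ) π̃(f) for 1 ≤ i, j ≤ d; (C) π̃(y₀ f) = −(m₀/mⱼ) π̃(yⱼ f) + (m₀/mⱼ) zⱼ π̃(f) for 1 ≤ j ≤ d; (D) π̃(y₁ ⋯ y_d f) = 0; (E) π̃(g(y₁,…,y_r)) = g(z₁,…,z_r) for every polynomial g of degree at most d−1 not involving y₀. -/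
open MvPolynomial

/-!
Write `y_{≤k} = y₁ ⋯ y_k`. By induction on `p` (constants, sums, products with a variable) one
shows, simultaneously for all `k ≤ d`, that two solutions agree on `y_{≤k} p`; `k = 0` is the
claim. At `k = d` both vanish by (D). For `k < d` and constant `p`, (E) applies since `y_{≤k}` has
degree `k ≤ d - 1`. For `y_a p` with `F = y_{≤k} p`, conditions (A), (B), (C) with `j = k + 1`
express `π̃ (y_a F)` through `π̃ F` and `π̃ (y_{k+1} F) = π̃ (y_{≤k+1} p)`, which the induction
hypothesis covers.
-/

/-- Conditions (A)–(E) for the map `π̃ : ℚ[y₀,…,y_r] → ℚ[z₁,…,z_r]` of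
Pommersheim's stellar subdivision formula.  Variables `y₀,…,y_r` are indexed by
`Fin (r+1)` (with `yᵢ = X i`), variables `z₁,…,z_r` by `Fin r` (with
`z_{i+1} = X i`, so `z` and `y` indices are related by `Fin.succ`).
The constants `m₀, …, m_d` are given by `m : ℕ → ℚ`. -/
def SatisfiesABCDE (r d : ℕ) (m : ℕ → ℚ)
    (π : MvPolynomial (Fin (r + 1)) ℚ →ₗ[ℚ] MvPolynomial (Fin r) ℚ) : Prop :=
  -- (A) π̃(yᵢ f) = zᵢ π̃(f) for i > d
  (∀ (f : MvPolynomial (Fin (r + 1)) ℚ) (i : Fin r), d < (i : ℕ) + 1 →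
    π (X i.succ * f) = X i * π f) ∧
  -- (B) π̃(yᵢ f) = (mᵢ/mⱼ) π̃(yⱼ f) + (zᵢ − (mᵢ/mⱼ) zⱼ) π̃(f) for 1 ≤ i, j ≤ d
  (∀ (f : MvPolynomial (Fin (r + 1)) ℚ) (i j : Fin r), (i : ℕ) + 1 ≤ d → (j : ℕ) + 1 ≤ d →
    π (X i.succ * f) = (m ((i : ℕ) + 1) / m ((j : ℕ) + 1)) • π (X j.succ * f)
      + (X i - C (m ((i : ℕ) + 1) / m ((j : ℕ) + 1)) * X j) * π f) ∧
  -- (C) π̃(y₀ f) = −(m₀/mⱼ) π̃(yⱼ f) + (m₀/mⱼ) zⱼ π̃(f) for 1 ≤ j ≤ d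
  (∀ (f : MvPolynomial (Fin (r + 1)) ℚ) (j : Fin r), (j : ℕ) + 1 ≤ d →
    π (X 0 * f) = -(m 0 / m ((j : ℕ) + 1)) • π (X j.succ * f)
      + (m 0 / m ((j : ℕ) + 1)) • (X j * π f)) ∧
  -- (D) π̃(y₁ ⋯ y_d f) = 0
  (∀ f : MvPolynomial (Fin (r + 1)) ℚ,
    π ((∏ i ∈ Finset.univ.filter (fun i : Fin r => (i : ℕ) + 1 ≤ d), X i.succ) * f) = 0) ∧
  -- (E) π̃(g(y₁,…,y_r)) = g(z₁,…,z_r) for deg g ≤ d − 1 (g not involving y₀)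
  (∀ g : MvPolynomial (Fin r) ℚ, g.totalDegree ≤ d - 1 → π (rename Fin.succ g) = g)

section prodFirstVars

variable {R : Type*} [CommSemiring R]

noncomputable def prodFirstVars (r k : ℕ) : MvPolynomial (Fin r) R :=
  ∏ i ∈ Finset.univ.filter (fun i : Fin r => (i : ℕ) < k), X i

@[simp]
theorem prodFirstVars_zero (r : ℕ) : (prodFirstVars r 0 : MvPolynomial (Fin r) R) = 1 := by
  simp [prodFirstVars]

theorem prodFirstVars_succ {r k : ℕ} (hk : k < r) :
    (prodFirstVars r (k + 1) : MvPolynomial (Fin r) R) = X ⟨k, hk⟩ * prodFirstVars r k := by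
  have hfilter : Finset.univ.filter (fun i : Fin r => (i : ℕ) < k + 1) =
      insert ⟨k, hk⟩ (Finset.univ.filter (fun i : Fin r => (i : ℕ) < k)) := by
    ext i
    simp only [Finset.mem_filter, Finset.mem_univ, true_and, Finset.mem_insert, Fin.ext_iff]
    omega
  rw [prodFirstVars, hfilter, Finset.prod_insert (by simp)]
  rfl

theorem totalDegree_prodFirstVars_le [Nontrivial R] (r k : ℕ) :
    (prodFirstVars r k : MvPolynomial (Fin r) R).totalDegree ≤ k :=
  calc _ ≤ ∑ i ∈ Finset.univ.filter (fun i : Fin r => (i : ℕ) < k),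
          (X i : MvPolynomial (Fin r) R).totalDegree := totalDegree_finsetProd _ _
    _ ≤ ∑ i ∈ Finset.univ.filter (fun i : Fin r => (i : ℕ) < k), 1 :=
        Finset.sum_le_sum fun i _ => (totalDegree_X i).le
    _ ≤ k := by simp [Fin.card_filter_val_lt]

end prodFirstVars

namespace SatisfiesABCDE

variable {r d : ℕ} {m : ℕ → ℚ}
  {π π₁ π₂ : MvPolynomial (Fin (r + 1)) ℚ →ₗ[ℚ] MvPolynomial (Fin r) ℚ}

theorem map_X_mul_eq_of_eq (h₁ : SatisfiesABCDE r d m π₁) (h₂ : SatisfiesABCDE r d m π₂)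
    {f : MvPolynomial (Fin (r + 1)) ℚ} (hf : π₁ f = π₂ f) {j : Fin r} (hj : (j : ℕ) + 1 ≤ d)
    (hjf : π₁ (X j.succ * f) = π₂ (X j.succ * f)) (a : Fin (r + 1)) :
    π₁ (X a * f) = π₂ (X a * f) := by
  cases a using Fin.cases with
  | zero => rw [h₁.2.2.1 f j hj, h₂.2.2.1 f j hj, hjf, hf]
  | succ i =>
    by_cases hi : d < (i : ℕ) + 1
    · rw [h₁.1 f i hi, h₂.1 f i hi, hf]
    · rw [h₁.2.1 f i j (by omega) hj, h₂.2.1 f i j (by omega) hj, hjf, hf]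

theorem map_rename_prodFirstVars_mul_eq_zero (h : SatisfiesABCDE r d m π)
    (f : MvPolynomial (Fin (r + 1)) ℚ) :
    π (rename Fin.succ (prodFirstVars r d) * f) = 0 := by
  simpa [prodFirstVars, map_prod] using h.2.2.2.1 f

theorem map_rename_prodFirstVars_mul_eq (hdr : d ≤ r) (h₁ : SatisfiesABCDE r d m π₁)
    (h₂ : SatisfiesABCDE r d m π₂) (p : MvPolynomial (Fin (r + 1)) ℚ) {k : ℕ} (hk : k ≤ d) :
    π₁ (rename Fin.succ (prodFirstVars r k) * p) =
      π₂ (rename Fin.succ (prodFirstVars r k) * p) := by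
  induction p using MvPolynomial.induction_on generalizing k with
  | C a =>
    rcases hk.lt_or_eq with hkd | rfl
    · have hdeg := (totalDegree_prodFirstVars_le (R := ℚ) r k).trans (Nat.le_sub_one_of_lt hkd)
      rw [mul_comm, ← smul_eq_C_mul, map_smul, map_smul, h₁.2.2.2.2 _ hdeg, h₂.2.2.2.2 _ hdeg]
    · rw [h₁.map_rename_prodFirstVars_mul_eq_zero, h₂.map_rename_prodFirstVars_mul_eq_zero]
  | add p q hp hq => rw [mul_add, map_add, map_add, hp hk, hq hk]
  | mul_X p a hp =>
    rcases hk.lt_or_eq with hkd | rfl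
    · rw [mul_comm p, mul_left_comm]
      refine h₁.map_X_mul_eq_of_eq h₂ (hp hk) (j := ⟨k, by omega⟩) hkd ?_ a
      have hnext := hp (k := k + 1) hkd
      simpa only [prodFirstVars_succ (show k < r by omega), map_mul, rename_X, mul_assoc]
        using hnext
    · rw [h₁.map_rename_prodFirstVars_mul_eq_zero, h₂.map_rename_prodFirstVars_mul_eq_zero]

end SatisfiesABCDE

theorem stellar_pushforward_unique_general {r d : ℕ} (hdr : d ≤ r)
    (m : ℕ → ℚ)
    (π₁ π₂ : MvPolynomial (Fin (r + 1)) ℚ →ₗ[ℚ] MvPolynomial (Fin r) ℚ)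
    (h₁ : SatisfiesABCDE r d m π₁) (h₂ : SatisfiesABCDE r d m π₂) :
    π₁ = π₂ :=
  LinearMap.ext fun p => by
    simpa using h₁.map_rename_prodFirstVars_mul_eq hdr h₂ p (Nat.zero_le d)

/-- There is at most one `ℚ`-linear map `π̃ : ℚ[y₀,…,y_r] → ℚ[z₁,…,z_r]`
satisfying conditions (A)–(E), for `1 ≤ d ≤ r` and nonzero `m₀, …, m_d`. -/
theorem stellar_pushforward_unique {r d : ℕ} (hd1 : 1 ≤ d) (hdr : d ≤ r)
    (m : ℕ → ℚ) (hm : ∀ i ≤ d, m i ≠ 0)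
    (π₁ π₂ : MvPolynomial (Fin (r + 1)) ℚ →ₗ[ℚ] MvPolynomial (Fin r) ℚ)
    (h₁ : SatisfiesABCDE r d m π₁) (h₂ : SatisfiesABCDE r d m π₂) :
    π₁ = π₂ :=
  stellar_pushforward_unique_general hdr m π₁ π₂ h₁ h₂
end

section
/- With notation as in the uniqueness statement for π̃ (conditions A–E with constants m₀,…,m_d all nonzero), every monomial y₀^{a₀} y₁^{a₁} ⋯ y_r^{a_r} of degree ≥ d can, using relations (A), (B), (C), be rewritten modulo lower-complexity terms so that its image under any map π̃ satisfying (A)–(E) is determined; in particular, any map satisfying (A)–(E) is determined on all of ℚ[y₀,…,y_r] by induction on degree and on the number of indices 1 ≤ i ≤ d with aᵢ = 0. -/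
/-!
Induct on the exponent vector `a` of `y^a`, ordered lexicographically by total degree, then `a₀`,
then the number of `1 ≤ i ≤ d` with `aᵢ = 0`. If all these `aᵢ` are positive, `y^a` is a multiple
of `y₁⋯y_d` and (D) kills it; otherwise fix `j ≤ d` with `a_j = 0`. A factor `y₀` is traded for
`y_j` by (C), which keeps the degree and lowers `a₀`; a factor `yᵢ` with `i > d` is split off by
(A); in degree `≤ d - 1` (E) gives the value. In the remaining case a degree `≥ d` is carried by
at most `d - 1` indices `i ≤ d`, so some `aᵢ ≥ 2`, and (B) trades one `yᵢ` for `y_j`, lowering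
the number of vanishing exponents.
-/

open MvPolynomial

open Finset Finsupp

namespace Finsupp

theorem degree_cons {M : Type*} [AddCommMonoid M] {n : ℕ} (y : M) (t : Fin n →₀ M) :
    (cons y t).degree = y + t.degree := by
  simp [degree_eq_sum, Fin.sum_univ_succ]

theorem sum_single_one_le_iff {σ : Type*} (s : Finset σ) (a : σ →₀ ℕ) :
    ∑ i ∈ s, single i 1 ≤ a ↔ ∀ i ∈ s, a i ≠ 0 := by
  classical
  simp only [le_def, finsetSum_apply, single_apply, Finset.sum_ite_eq']
  refine ⟨fun h i hi => by simpa [hi, Nat.one_le_iff_ne_zero] using h i, fun h i => ?_⟩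
  split_ifs with hi
  · exact Nat.one_le_iff_ne_zero.2 (h i hi)
  · exact Nat.zero_le _

theorem mapDomain_succ_eq_cons {M : Type*} [AddCommMonoid M] {n : ℕ} (t : Fin n →₀ M) :
    mapDomain Fin.succ t = cons 0 t := by
  ext k
  cases k using Fin.cases with
  | zero => simp [mapDomain_of_notMem_range]
  | succ k => simp [mapDomain_apply (Fin.succ_injective _)]

end Finsupp

namespace MvPolynomial

theorem rename_succ_monomial {R : Type*} [CommSemiring R] {n : ℕ} (t : Fin n →₀ ℕ) (c : R) :
    rename Fin.succ (monomial t c) = monomial (Finsupp.cons 0 t) c := by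
  rw [rename_monomial, Finsupp.mapDomain_succ_eq_cons]

theorem X_mul_monomial {R σ : Type*} [CommSemiring R] (i : σ) (b : σ →₀ ℕ) (c : R) :
    X i * monomial b c = monomial (Finsupp.single i 1 + b) c := by
  rw [monomial_single_add, pow_one]

theorem prod_X_mul_monomial {R σ : Type*} [CommSemiring R] (s : Finset σ) (b : σ →₀ ℕ) (c : R) :
    (∏ i ∈ s, X i) * monomial b c = monomial ((∑ i ∈ s, Finsupp.single i 1) + b) c := by
  simp only [X, ← monomial_sum_one, monomial_mul, one_mul]

end MvPolynomial

namespace SatisfiesABCDE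

variable {r d : ℕ}

def lowIndices (r d : ℕ) : Finset (Fin r) := univ.filter fun i : Fin r => (i : ℕ) + 1 ≤ d

def numLowZeros (d : ℕ) (a : Fin (r + 1) →₀ ℕ) : ℕ := #{i ∈ lowIndices r d | a i.succ = 0}

theorem card_lowIndices_le : #(lowIndices r d) ≤ d :=
  calc #(lowIndices r d) ≤ #(range d) :=
        card_le_card_of_injOn Fin.val (fun i hi => by simpa [lowIndices] using hi)
          Fin.val_injective.injOn
    _ = d := card_range d

theorem exists_mem_lowIndices_two_le {a : Fin (r + 1) →₀ ℕ} {j : Fin r}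
    (hj : j ∈ lowIndices r d) (haj : a j.succ = 0) (ha0 : a 0 = 0)
    (hhigh : ∀ i ∉ lowIndices r d, a i.succ = 0) (hdeg : d - 1 < a.degree) :
    ∃ i ∈ lowIndices r d, 2 ≤ a i.succ := by
  by_contra! hle
  have hsum : a.degree = ∑ i ∈ (lowIndices r d).erase j, a i.succ := by
    rw [degree_eq_sum, Fin.sum_univ_succ, ha0, zero_add,
      sum_erase (f := fun i : Fin r => a i.succ) _ haj, ← sum_subset (subset_univ _) fun i _ hi => hhigh i hi]
  have hsum_le : ∑ i ∈ (lowIndices r d).erase j, a i.succ ≤ #((lowIndices r d).erase j) := by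
    simpa using sum_le_card_nsmul _ _ 1 fun i hi => Nat.le_of_lt_succ (hle i (mem_of_mem_erase hi))
  rw [card_erase_of_mem hj] at hsum_le
  have := card_lowIndices_le (r := r) (d := d)
  omega

noncomputable def complexity (d : ℕ) (a : Fin (r + 1) →₀ ℕ) : ℕ ×ₗ ℕ ×ₗ ℕ :=
  toLex (a.degree, toLex (a 0, numLowZeros d a))

theorem complexity_lt_single_add (k : Fin (r + 1)) (b : Fin (r + 1) →₀ ℕ) :
    complexity d b < complexity d (single k 1 + b) := by
  simp [complexity, Prod.Lex.toLex_lt_toLex]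

theorem complexity_single_succ_add_lt (j : Fin r) (b : Fin (r + 1) →₀ ℕ) :
    complexity d (single j.succ 1 + b) < complexity d (single 0 1 + b) := by
  simp [complexity, Prod.Lex.toLex_lt_toLex, Fin.succ_ne_zero]

theorem complexity_single_succ_add_lt_of_mem {i j : Fin r} {b : Fin (r + 1) →₀ ℕ}
    (hj : j ∈ lowIndices r d) (hbj : b j.succ = 0) (hbi : b i.succ ≠ 0) :
    complexity d (single j.succ 1 + b) < complexity d (single i.succ 1 + b) := by
  have hzeros : numLowZeros d (single j.succ 1 + b) < numLowZeros d (single i.succ 1 + b) := by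
    simp only [numLowZeros, Finsupp.add_apply, Nat.add_eq_zero_iff, single_apply_eq_zero,
      Fin.succ_inj, one_ne_zero, imp_false]
    refine card_lt_card ((ssubset_iff_of_subset ?_).2 ⟨j, ?_, ?_⟩)
    · intro k
      simp only [mem_filter]
      rintro ⟨hk, -, hbk⟩
      exact ⟨hk, fun hki => hbi (hki ▸ hbk), hbk⟩
    · simpa [hj, hbj] using fun h : j = i => hbi (h ▸ hbj)
    · simp
  simp [complexity, Prod.Lex.toLex_lt_toLex, Fin.succ_ne_zero, hzeros]

variable {m : ℕ → ℚ} {π π₁ π₂ : MvPolynomial (Fin (r + 1)) ℚ →ₗ[ℚ] MvPolynomial (Fin r) ℚ}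
  {f : MvPolynomial (Fin (r + 1)) ℚ}

theorem apply_X_succ_mul_eq_of_lt (h₁ : SatisfiesABCDE r d m π₁) (h₂ : SatisfiesABCDE r d m π₂)
    {k : Fin r} (hk : d < (k : ℕ) + 1) (hf : π₁ f = π₂ f) :
    π₁ (X k.succ * f) = π₂ (X k.succ * f) := by
  rw [h₁.1 f k hk, h₂.1 f k hk, hf]

theorem apply_X_succ_mul_eq_of_le (h₁ : SatisfiesABCDE r d m π₁) (h₂ : SatisfiesABCDE r d m π₂)
    {i j : Fin r} (hi : (i : ℕ) + 1 ≤ d) (hj : (j : ℕ) + 1 ≤ d) (hf : π₁ f = π₂ f)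
    (hjf : π₁ (X j.succ * f) = π₂ (X j.succ * f)) : π₁ (X i.succ * f) = π₂ (X i.succ * f) := by
  rw [h₁.2.1 f i j hi hj, h₂.2.1 f i j hi hj, hf, hjf]

theorem apply_X_zero_mul_eq (h₁ : SatisfiesABCDE r d m π₁) (h₂ : SatisfiesABCDE r d m π₂)
    {j : Fin r} (hj : (j : ℕ) + 1 ≤ d) (hf : π₁ f = π₂ f)
    (hjf : π₁ (X j.succ * f) = π₂ (X j.succ * f)) : π₁ (X 0 * f) = π₂ (X 0 * f) := by
  rw [h₁.2.2.1 f j hj, h₂.2.2.1 f j hj, hf, hjf]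

theorem apply_monomial_eq_zero (h : SatisfiesABCDE r d m π) {a : Fin (r + 1) →₀ ℕ}
    (ha : ∀ i ∈ lowIndices r d, a i.succ ≠ 0) : π (monomial a 1) = 0 := by
  have hle : ∑ k ∈ (lowIndices r d).map (Fin.succEmb r), single k 1 ≤ a :=
    (sum_single_one_le_iff _ _).2 (by simpa using ha)
  obtain ⟨b, rfl⟩ := exists_add_of_le hle
  rw [← prod_X_mul_monomial, prod_map]
  exact h.2.2.2.1 _

theorem apply_monomial_of_degree_le (h : SatisfiesABCDE r d m π) {a : Fin (r + 1) →₀ ℕ}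
    (ha0 : a 0 = 0) (hdeg : a.degree ≤ d - 1) : π (monomial a 1) = monomial (tail a) 1 := by
  have ha : cons 0 (tail a) = a := ha0 ▸ cons_tail a
  have hdeg' : (monomial (tail a) (1 : ℚ)).totalDegree ≤ d - 1 := by
    rw [← ha, degree_cons, zero_add] at hdeg
    rwa [totalDegree_monomial _ one_ne_zero]
  rw [← h.2.2.2.2 _ hdeg', rename_succ_monomial, ha]

theorem apply_monomial_eq (h₁ : SatisfiesABCDE r d m π₁) (h₂ : SatisfiesABCDE r d m π₂)
    (a : Fin (r + 1) →₀ ℕ) : π₁ (monomial a 1) = π₂ (monomial a 1) := by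
  by_cases hD : ∀ i ∈ lowIndices r d, a i.succ ≠ 0
  · rw [h₁.apply_monomial_eq_zero hD, h₂.apply_monomial_eq_zero hD]
  obtain ⟨j, hj, haj⟩ : ∃ j ∈ lowIndices r d, a j.succ = 0 := by simpa using hD
  have hjd : (j : ℕ) + 1 ≤ d := (mem_filter.1 hj).2
  by_cases ha0 : a 0 ≠ 0
  · obtain ⟨b, rfl⟩ := exists_add_of_le (single_le_iff.2 (Nat.one_le_iff_ne_zero.2 ha0))
    have := complexity_lt_single_add (d := d) 0 b
    have := complexity_single_succ_add_lt (d := d) j b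
    have ih := apply_monomial_eq h₁ h₂ b
    have ih' := apply_monomial_eq h₁ h₂ (single j.succ 1 + b)
    rw [← X_mul_monomial] at ih' ⊢
    exact apply_X_zero_mul_eq h₁ h₂ hjd ih ih'
  push Not at ha0
  by_cases hE : a.degree ≤ d - 1
  · rw [h₁.apply_monomial_of_degree_le ha0 hE, h₂.apply_monomial_of_degree_le ha0 hE]
  by_cases hA : ∃ k : Fin r, d < k + 1 ∧ a k.succ ≠ 0
  · obtain ⟨k, hk, hak⟩ := hA
    obtain ⟨b, rfl⟩ := exists_add_of_le (single_le_iff.2 (Nat.one_le_iff_ne_zero.2 hak))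
    have := complexity_lt_single_add (d := d) k.succ b
    have ih := apply_monomial_eq h₁ h₂ b
    rw [← X_mul_monomial]
    exact apply_X_succ_mul_eq_of_lt h₁ h₂ hk ih
  push Not at hA
  obtain ⟨i, hi, hai⟩ := exists_mem_lowIndices_two_le hj haj ha0
    (fun k hk => hA k (by simpa [lowIndices] using hk)) (by omega)
  have hid : (i : ℕ) + 1 ≤ d := (mem_filter.1 hi).2
  obtain ⟨b, rfl⟩ := exists_add_of_le (single_le_iff.2 (by omega : 1 ≤ a i.succ))
  have := complexity_lt_single_add (d := d) i.succ b
  have hbj : b j.succ = 0 := (Nat.add_eq_zero_iff.1 haj).2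
  have hbi : b i.succ ≠ 0 := by rw [Finsupp.add_apply, single_eq_same] at hai; omega
  have := complexity_single_succ_add_lt_of_mem hj hbj hbi
  have ih := apply_monomial_eq h₁ h₂ b
  have ih' := apply_monomial_eq h₁ h₂ (single j.succ 1 + b)
  rw [← X_mul_monomial] at ih' ⊢
  exact apply_X_succ_mul_eq_of_le h₁ h₂ hid hjd ih ih'
termination_by complexity d a
-- the termination goals still mention `a`, not the `single _ 1 + b` substituted for it
decreasing_by all_goals subst_vars; assumption

end SatisfiesABCDE

theorem stellar_pushforward_determined_on_monomials_general {r d : ℕ}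
    (m : ℕ → ℚ)
    (π₁ π₂ : MvPolynomial (Fin (r + 1)) ℚ →ₗ[ℚ] MvPolynomial (Fin r) ℚ)
    (h₁ : SatisfiesABCDE r d m π₁) (h₂ : SatisfiesABCDE r d m π₂) :
    (∀ a : Fin (r + 1) →₀ ℕ,
      π₁ (monomial a (1 : ℚ)) = π₂ (monomial a (1 : ℚ))) ∧ π₁ = π₂ :=
  ⟨h₁.apply_monomial_eq h₂,
    linearMap_ext fun a => LinearMap.ext_ring (h₁.apply_monomial_eq h₂ a)⟩

/-- Any `ℚ`-linear map satisfying conditions (A)–(E) is determined on every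
monomial `y₀^{a₀} ⋯ y_r^{a_r}` (in particular on those of degree ≥ d, which are
rewritten via (A), (B), (C), (D)); hence it is determined on all of
`ℚ[y₀,…,y_r]`. -/
theorem stellar_pushforward_determined_on_monomials {r d : ℕ}
    (hd1 : 1 ≤ d) (hdr : d ≤ r)
    (m : ℕ → ℚ) (hm : ∀ i ≤ d, m i ≠ 0)
    (π₁ π₂ : MvPolynomial (Fin (r + 1)) ℚ →ₗ[ℚ] MvPolynomial (Fin r) ℚ)
    (h₁ : SatisfiesABCDE r d m π₁) (h₂ : SatisfiesABCDE r d m π₂) :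
    (∀ a : Fin (r + 1) →₀ ℕ,
      π₁ (monomial a (1 : ℚ)) = π₂ (monomial a (1 : ℚ))) ∧ π₁ = π₂ :=
  stellar_pushforward_determined_on_monomials_general m π₁ π₂ h₁ h₂
end

section
/- Let Δ be a finite simplicial complex on vertex set {1,…,r} and let I_Δ ⊂ ℚ[D₁,…,D_r] be its Stanley–Reisner ideal, generated by monomials D_{i₁}⋯D_{i_k} with {i₁,…,i_k} not a face of Δ. Suppose J is an ideal with the property that for every nonempty face {i₁,…,i_s} of Δ and every index j in that face, there is a linear form L = c_j D_j + Σ_{i ∉ {i₁,…,i_s}} c_i D_i with c_j ≠ 0 such that L · D_{i₁} ⋯ D_{i_s} ∈ I_Δ + J. Then every monomial in ℚ[D₁,…,D_r] is congruent modulo I_Δ + J to a ℚ-linear combination of squarefree monomials supported on faces of Δ. -/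
/-!
Modulo the Stanley–Reisner ideal a monomial `X^b · ∏_{i ∈ s} X_i` with `supp b ⊆ s` vanishes
unless `s` is a face. If `s` is a face and `j ∈ s`, the relation `L · ∏_{i ∈ s} X_i ≡ 0` trades
`X_j · ∏_{i ∈ s} X_i` for monomials `∏_{k ∈ s ∪ {i}} X_k` with `i ∉ s`, so one factor of `X^b` is
absorbed into the squarefree part. Induction on the degree of `X^b` ends at squarefree face
monomials, and every monomial has this shape with `s` its support.
-/

open MvPolynomial

theorem MvPolynomial.monomial_one_eq_prod_map_X {σ R : Type*} [CommSemiring R] (a : σ →₀ ℕ) :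
    monomial a (1 : R) = (a.toMultiset.map X).prod := by
  induction a using Finsupp.induction with
  | zero => simp
  | single_add i k f _ _ ih =>
    rw [map_add, Multiset.map_add, Multiset.prod_add, ← ih, monomial_single_add]
    simp [Multiset.map_nsmul, Multiset.prod_nsmul]

theorem MvPolynomial.sum_C_mul_X_mul_prod_X {σ R : Type*} [CommSemiring R] [Fintype σ]
    [DecidableEq σ] (c : σ → R) {s : Finset σ} {j : σ} (hj : j ∈ s)
    (hc : ∀ i ∈ s, i ≠ j → c i = 0) :
    (∑ i, C (c i) * X i) * ∏ i ∈ s, X i =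
      C (c j) * (X j * ∏ i ∈ s, X i) + ∑ i ∈ sᶜ, C (c i) * ∏ k ∈ insert i s, X k := by
  have hface : ∑ i ∈ s, C (c i) * (X i : MvPolynomial σ R) = C (c j) * X j :=
    Finset.sum_eq_single_of_mem j hj fun i hi hij => by rw [hc i hi hij, C_0, zero_mul]
  rw [← Finset.sum_add_sum_compl s, hface, add_mul, Finset.sum_mul, mul_assoc]
  congr 1
  refine Finset.sum_congr rfl fun i hi => ?_
  rw [Finset.prod_insert (Finset.mem_compl.mp hi), mul_assoc]

section FaceReducible

variable {σ K : Type*} [Field K] {Δ : Finset (Finset σ)} {N : Ideal (MvPolynomial σ K)}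

variable (Δ N) in
noncomputable def faceReducible : Submodule K (MvPolynomial σ K) :=
  Submodule.span K {p | ∃ s ∈ Δ, p = ∏ i ∈ s, X i} ⊔ N.restrictScalars K

theorem mem_faceReducible_of_mem {p : MvPolynomial σ K} (hp : p ∈ N) : p ∈ faceReducible Δ N :=
  Submodule.mem_sup_right hp

theorem prod_X_mem_faceReducible (hnonface : ∀ s ∉ Δ, ∏ i ∈ s, X i ∈ N) (s : Finset σ) :
    ∏ i ∈ s, X i ∈ faceReducible Δ N := by
  by_cases hs : s ∈ Δ
  · exact Submodule.mem_sup_left (Submodule.subset_span ⟨s, hs, rfl⟩)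
  · exact mem_faceReducible_of_mem (hnonface s hs)

variable [Fintype σ] [DecidableEq σ]

theorem prod_map_X_mul_prod_X_mem_faceReducible (hnonface : ∀ s ∉ Δ, ∏ i ∈ s, X i ∈ N)
    (hlin : ∀ s ∈ Δ, ∀ j ∈ s, ∃ c : σ → K, c j ≠ 0 ∧ (∀ i ∈ s, i ≠ j → c i = 0) ∧
      (∑ i, C (c i) * X i) * ∏ i ∈ s, X i ∈ N)
    (m : Multiset σ) :
    ∀ s : Finset σ, (∀ i ∈ m, i ∈ s) → (m.map X).prod * ∏ i ∈ s, X i ∈ faceReducible Δ N := by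
  induction m using Multiset.induction_on with
  | empty => simpa using prod_X_mem_faceReducible hnonface
  | cons j m ih =>
    intro s hms
    have hj : j ∈ s := hms j (Multiset.mem_cons_self j m)
    have hm : ∀ i ∈ m, i ∈ s := fun i hi => hms i (Multiset.mem_cons_of_mem hi)
    by_cases hs : s ∈ Δ
    swap
    · exact mem_faceReducible_of_mem (Ideal.mul_mem_left _ _ (hnonface s hs))
    obtain ⟨c, hcj, hc, hL⟩ := hlin s hs j hj
    set P : MvPolynomial σ K := (m.map X).prod
    have hinsert : ∀ i ∈ sᶜ, P * (C (c i) * ∏ k ∈ insert i s, X k) ∈ faceReducible Δ N :=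
      fun i _ => by
        rw [mul_left_comm, ← smul_eq_C_mul]
        exact Submodule.smul_mem _ _
          (ih (insert i s) fun k hk => Finset.mem_insert_of_mem (hm k hk))
    have hrel : c j • ((Multiset.map X (j ::ₘ m)).prod * ∏ i ∈ s, X i) =
        P * ((∑ i, C (c i) * X i) * ∏ i ∈ s, X i) -
          ∑ i ∈ sᶜ, P * (C (c i) * ∏ k ∈ insert i s, X k) := by
      rw [sum_C_mul_X_mul_prod_X c hj hc, mul_add, Finset.mul_sum, add_sub_cancel_right,
        Multiset.map_cons, Multiset.prod_cons, smul_eq_C_mul]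
      ring
    rw [← Submodule.smul_mem_iff _ hcj, hrel]
    exact Submodule.sub_mem _ (mem_faceReducible_of_mem (Ideal.mul_mem_left _ _ hL))
      (Submodule.sum_mem _ hinsert)

theorem prod_map_X_mem_faceReducible (hnonface : ∀ s ∉ Δ, ∏ i ∈ s, X i ∈ N)
    (hlin : ∀ s ∈ Δ, ∀ j ∈ s, ∃ c : σ → K, c j ≠ 0 ∧ (∀ i ∈ s, i ≠ j → c i = 0) ∧
      (∑ i, C (c i) * X i) * ∏ i ∈ s, X i ∈ N)
    (m : Multiset σ) : (m.map X).prod ∈ faceReducible Δ N := by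
  have hsplit : (m.map X).prod = (((m - m.dedup).map X).prod * ∏ i ∈ m.toFinset, X i :
      MvPolynomial σ K) := by
    rw [Finset.prod_eq_multiset_prod, Multiset.toFinset_val, ← Multiset.prod_add,
      ← Multiset.map_add, tsub_add_cancel_of_le (Multiset.dedup_le m)]
  rw [hsplit]
  exact prod_map_X_mul_prod_X_mem_faceReducible hnonface hlin _ _ fun i hi =>
    Multiset.mem_toFinset.mpr (Multiset.mem_of_le tsub_le_self hi)

end FaceReducible

theorem squarefree_reduction_general {r : ℕ} (Δ : Finset (Finset (Fin r)))
    (I J : Ideal (MvPolynomial (Fin r) ℚ))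
    (hI : I = Ideal.span
      {p : MvPolynomial (Fin r) ℚ | ∃ s : Finset (Fin r), s ∉ Δ ∧ p = ∏ i ∈ s, X i})
    (hJ : ∀ s ∈ Δ, s.Nonempty → ∀ j ∈ s, ∃ c : Fin r → ℚ, c j ≠ 0 ∧
      (∀ i ∈ s, i ≠ j → c i = 0) ∧
      (∑ i, C (c i) * X i) * ∏ i ∈ s, X i ∈ I ⊔ J) :
    ∀ a : Fin r →₀ ℕ,
      ∃ q ∈ Submodule.span ℚ
        {p : MvPolynomial (Fin r) ℚ | ∃ s ∈ Δ, p = ∏ i ∈ s, X i},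
      monomial a (1 : ℚ) - q ∈ I ⊔ J := by
  intro a
  have hnonface : ∀ s ∉ Δ, ∏ i ∈ s, X i ∈ I ⊔ J := fun s hs =>
    Ideal.mem_sup_left (hI ▸ Ideal.subset_span ⟨s, hs, rfl⟩)
  have hmem : monomial a (1 : ℚ) ∈ faceReducible Δ (I ⊔ J) := by
    rw [monomial_one_eq_prod_map_X]
    exact prod_map_X_mem_faceReducible hnonface
      (fun s hs j hj => hJ s hs ⟨j, hj⟩ j hj) a.toMultiset
  obtain ⟨q, hq, n, hn, hqn⟩ := Submodule.mem_sup.mp hmem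
  exact ⟨q, hq, by rwa [← hqn, add_sub_cancel_left]⟩

/-- Squarefree reduction modulo the Stanley–Reisner ideal plus linear relations:
given a simplicial complex `Δ` on `{1,…,r}` with Stanley–Reisner ideal `I`, and
an ideal `J` such that for every nonempty face `s` of `Δ` and every `j ∈ s`
there is a linear form `L = c_j D_j + Σ_{i ∉ s} c_i D_i` with `c_j ≠ 0` and
`L · ∏_{i ∈ s} D_i ∈ I + J`, every monomial is congruent modulo `I + J` to a
`ℚ`-linear combination of squarefree monomials supported on faces of `Δ`. -/
theorem squarefree_reduction {r : ℕ} (Δ : Finset (Finset (Fin r)))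
    (hΔ : ∀ s ∈ Δ, ∀ t ⊆ s, t ∈ Δ)
    (I J : Ideal (MvPolynomial (Fin r) ℚ))
    (hI : I = Ideal.span
      {p : MvPolynomial (Fin r) ℚ | ∃ s : Finset (Fin r), s ∉ Δ ∧ p = ∏ i ∈ s, X i})
    (hJ : ∀ s ∈ Δ, s.Nonempty → ∀ j ∈ s, ∃ c : Fin r → ℚ, c j ≠ 0 ∧
      (∀ i ∈ s, i ≠ j → c i = 0) ∧
      (∑ i, C (c i) * X i) * ∏ i ∈ s, X i ∈ I ⊔ J) :
    ∀ a : Fin r →₀ ℕ,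
      ∃ q ∈ Submodule.span ℚ
        {p : MvPolynomial (Fin r) ℚ | ∃ s ∈ Δ, p = ∏ i ∈ s, X i},
      monomial a (1 : ℚ) - q ∈ I ⊔ J :=
  squarefree_reduction_general Δ I J hI hJ
end

section
/- Let Σ be a fan in a lattice N, let ρ₀ be a ray not in Σ contained in the support of Σ, and let σ be the minimal cone of Σ containing ρ₀. Define the stellar subdivision Σ' of Σ at ρ₀ by replacing every cone τ ⊇ ρ₀ by the cones ρ₀ + δ for δ a face of τ not containing ρ₀ (keeping all cones not containing ρ₀). Then Σ' is a fan with the same support as Σ, and every cone of Σ' is contained in a cone of Σ. -/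
/-!
Every cone of the fan is generated by finitely many vectors and, by Fourier–Motzkin elimination,
is also cut out by finitely many linear inequalities. Write `ρ = ℚ≥0 v`. If `δ` is a face of a cone
`τ ∋ v` with `v ∉ δ`, a functional cutting out `δ` is positive at `v`, so `ρ + δ` is a pyramid over
`δ` with apex `ρ`: its faces are the faces of `δ` and the cones `ρ + ε` for faces `ε` of `δ`.
Decompositions `c v + b` with `b` in such a face are unique across cones, because `c` can be read
off from a functional on `τ₁ ∩ τ₂` cutting out `δ₁ ∩ τ₁ ∩ τ₂`; hence
`(ρ + δ₁) ∩ (ρ + δ₂) = ρ + (δ₁ ∩ δ₂)`, and an old cone `σ ∌ v` meets `ρ + δ` in `σ ∩ δ`. For the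
support, a point of `τ ∋ v` is moved along `-v` until one of the inequalities of `τ` becomes tight;
strict convexity of `τ` guarantees that one of them is positive at `v`.
-/

open Module

/-- A (strictly convex) rational polyhedral cone in `ℚⁿ`. -/
def IsRatPolyCone {n : ℕ} (σ : Set (Fin n → ℚ)) : Prop :=
  (∃ s : Finset (Fin n → ℤ), σ =
    {x | ∃ c : (Fin n → ℤ) → ℚ, (∀ v, 0 ≤ c v) ∧
      x = ∑ v ∈ s, c v • (fun i => (v i : ℚ))}) ∧
  ∀ x ∈ σ, -x ∈ σ → x = 0

/-- `τ` is a face of `σ`. -/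
def IsFaceOf {n : ℕ} (τ σ : Set (Fin n → ℚ)) : Prop :=
  ∃ u : (Fin n → ℚ) →ₗ[ℚ] ℚ, (∀ x ∈ σ, 0 ≤ u x) ∧ τ = {x ∈ σ | u x = 0}

/-- A fan: a finite collection of strictly convex rational polyhedral cones,
closed under taking faces, any two of which intersect in a common face. -/
def IsFan {n : ℕ} (S : Set (Set (Fin n → ℚ))) : Prop :=
  S.Finite ∧
  (∀ σ ∈ S, IsRatPolyCone σ) ∧
  (∀ σ ∈ S, ∀ τ : Set (Fin n → ℚ), IsFaceOf τ σ → τ ∈ S) ∧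
  (∀ σ ∈ S, ∀ τ ∈ S, IsFaceOf (σ ∩ τ) σ ∧ IsFaceOf (σ ∩ τ) τ)

/-- A rational ray: the nonnegative multiples of a nonzero lattice vector. -/
def IsRay {n : ℕ} (ρ : Set (Fin n → ℚ)) : Prop :=
  ∃ v : Fin n → ℤ, (fun i => (v i : ℚ)) ≠ 0 ∧
    ρ = {x | ∃ c : ℚ, 0 ≤ c ∧ x = c • (fun i => (v i : ℚ))}

section

open Pointwise

variable {n : ℕ}

def castVec (v : Fin n → ℤ) : Fin n → ℚ := fun i => v i

def ray (v : Fin n → ℚ) : Set (Fin n → ℚ) := {x | ∃ c : ℚ, 0 ≤ c ∧ x = c • v}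

def conicSpan {ι : Type*} (s : Finset ι) (f : ι → Fin n → ℚ) : Set (Fin n → ℚ) :=
  {x | ∃ c : ι → ℚ, (∀ i, 0 ≤ c i) ∧ x = ∑ i ∈ s, c i • f i}

def polyhedralCone (U : Finset (Dual ℚ (Fin n → ℚ))) : Set (Fin n → ℚ) :=
  {x | ∀ u ∈ U, 0 ≤ u x}

theorem Set.inter_eq_sep_of_subset {α : Type*} {σ τ A : Set α} {p : α → Prop}
    (h : σ ∩ τ = {x ∈ τ | p x}) (hA : A ⊆ τ) : σ ∩ A = {x ∈ A | p x} := by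
  ext x
  have := Set.ext_iff.1 h x
  simp only [Set.mem_inter_iff, Set.mem_ofPred_eq] at this ⊢
  have := @hA x
  tauto

theorem exists_pos_mul_add_pos {𝕜 κ : Type*} [Field 𝕜] [LinearOrder 𝕜] [IsStrictOrderedRing 𝕜]
    (t : Finset κ) (a b : κ → 𝕜) : ∃ N : 𝕜, ∀ i ∈ t, 0 < a i → 0 < N * a i + b i := by
  refine ((Filter.eventually_all_finset t).2 fun i _ => ?_).exists (f := Filter.atTop)
  by_cases ha : 0 < a i
  · have := Filter.tendsto_atTop_add_const_right _ (b i) (Filter.tendsto_id.atTop_mul_const ha)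
    exact (this.eventually_gt_atTop 0).mono fun N hN _ => hN
  · exact Filter.Eventually.of_forall fun N h => absurd h ha

section Ray

variable {v : Fin n → ℚ}

theorem mem_ray_self (v : Fin n → ℚ) : v ∈ ray v := ⟨1, zero_le_one, (one_smul ℚ v).symm⟩

theorem zero_mem_ray (v : Fin n → ℚ) : (0 : Fin n → ℚ) ∈ ray v :=
  ⟨0, le_rfl, (zero_smul ℚ v).symm⟩

theorem mem_ray_add {δ : Set (Fin n → ℚ)} {x : Fin n → ℚ} :
    x ∈ ray v + δ ↔ ∃ c : ℚ, 0 ≤ c ∧ ∃ b ∈ δ, x = c • v + b := by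
  simp only [Set.mem_add, ray, Set.mem_ofPred_eq]
  constructor
  · rintro ⟨_, ⟨c, hc, rfl⟩, b, hb, rfl⟩
    exact ⟨c, hc, b, hb, rfl⟩
  · rintro ⟨c, hc, b, hb, rfl⟩
    exact ⟨_, ⟨c, hc, rfl⟩, b, hb, rfl⟩

theorem subset_ray_add (δ : Set (Fin n → ℚ)) : δ ⊆ ray v + δ :=
  Set.subset_add_right δ (zero_mem_ray v)

end Ray

section ConicSpan

variable {ι : Type*} {s : Finset ι} {f : ι → Fin n → ℚ}

theorem zero_mem_conicSpan : (0 : Fin n → ℚ) ∈ conicSpan s f :=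
  ⟨0, fun _ => le_rfl, by simp⟩

theorem mem_conicSpan_of_mem {i : ι} (hi : i ∈ s) : f i ∈ conicSpan s f := by
  classical
  exact ⟨Pi.single i 1, fun j => by by_cases h : j = i <;> simp [h], by
    rw [Finset.sum_eq_single i (fun j _ hj => by simp [hj]) (absurd hi)]; simp⟩

theorem add_mem_conicSpan {x y : Fin n → ℚ} (hx : x ∈ conicSpan s f) (hy : y ∈ conicSpan s f) :
    x + y ∈ conicSpan s f := by
  obtain ⟨c, hc, rfl⟩ := hx
  obtain ⟨d, hd, rfl⟩ := hy
  exact ⟨c + d, fun i => add_nonneg (hc i) (hd i), by simp [add_smul, Finset.sum_add_distrib]⟩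

theorem smul_mem_conicSpan {x : Fin n → ℚ} {t : ℚ} (ht : 0 ≤ t) (hx : x ∈ conicSpan s f) :
    t • x ∈ conicSpan s f := by
  obtain ⟨c, hc, rfl⟩ := hx
  exact ⟨t • c, fun i => mul_nonneg ht (hc i), by simp [Finset.smul_sum, smul_smul]⟩

theorem conicSpan_mono {t : Finset ι} (h : s ⊆ t) : conicSpan s f ⊆ conicSpan t f := by
  classical
  rintro x ⟨c, hc, rfl⟩
  refine ⟨fun i => if i ∈ s then c i else 0, fun i => by dsimp only; split_ifs <;> simp [hc], ?_⟩
  rw [← Finset.sum_subset h (fun i _ hi => by simp [hi])]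
  exact Finset.sum_congr rfl fun i hi => by simp [hi]

theorem ray_subset_conicSpan {v : Fin n → ℚ} (hv : v ∈ conicSpan s f) : ray v ⊆ conicSpan s f := by
  rintro _ ⟨c, hc, rfl⟩
  exact smul_mem_conicSpan hc hv

theorem ray_add_subset_conicSpan {v : Fin n → ℚ} {δ : Set (Fin n → ℚ)} (hv : v ∈ conicSpan s f)
    (hδ : δ ⊆ conicSpan s f) : ray v + δ ⊆ conicSpan s f := by
  rintro _ ⟨a, ha, b, hb, rfl⟩
  exact add_mem_conicSpan (ray_subset_conicSpan hv ha) (hδ hb)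

theorem map_nonneg_of_mem_conicSpan {u : Dual ℚ (Fin n → ℚ)}
    (hu : ∀ i ∈ s, 0 ≤ u (f i)) {x : Fin n → ℚ} (hx : x ∈ conicSpan s f) : 0 ≤ u x := by
  obtain ⟨c, hc, rfl⟩ := hx
  simpa using Finset.sum_nonneg fun i hi => mul_nonneg (hc i) (hu i hi)

theorem mem_conicSpan_insert [DecidableEq ι] {a : ι} {x : Fin n → ℚ} :
    x ∈ conicSpan (insert a s) f ↔ ∃ μ : ℚ, 0 ≤ μ ∧ x - μ • f a ∈ conicSpan s f := by
  constructor
  · rintro ⟨c, hc, rfl⟩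
    by_cases ha : a ∈ s
    · rw [Finset.insert_eq_of_mem ha]
      exact ⟨0, le_rfl, by simpa using ⟨c, hc, rfl⟩⟩
    · rw [Finset.sum_insert ha]
      exact ⟨c a, hc a, by simpa using ⟨c, hc, rfl⟩⟩
  · rintro ⟨μ, hμ, hx⟩
    rw [← sub_add_cancel x (μ • f a)]
    exact add_mem_conicSpan (conicSpan_mono (Finset.subset_insert a s) hx)
      (smul_mem_conicSpan hμ (mem_conicSpan_of_mem (Finset.mem_insert_self a s)))

theorem conicSpan_sep_map_eq_zero {u : Dual ℚ (Fin n → ℚ)} (hu : ∀ i ∈ s, 0 ≤ u (f i)) :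
    {x ∈ conicSpan s f | u x = 0} = conicSpan {i ∈ s | u (f i) = 0} f := by
  ext x
  constructor
  · rintro ⟨⟨c, hc, rfl⟩, hx⟩
    simp only [map_sum, map_smul, smul_eq_mul] at hx
    rw [Finset.sum_eq_zero_iff_of_nonneg
      fun i hi => mul_nonneg (hc i) (hu i hi)] at hx
    refine ⟨c, hc, (Finset.sum_subset (Finset.filter_subset _ s) fun i hi hi' => ?_).symm⟩
    have hui : u (f i) ≠ 0 := fun h => hi' (Finset.mem_filter.2 ⟨hi, h⟩)
    simp [(mul_eq_zero.1 (hx i hi)).resolve_right hui]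
  · rintro hx
    refine ⟨conicSpan_mono (Finset.filter_subset _ s) hx, ?_⟩
    obtain ⟨c, -, rfl⟩ := hx
    simp only [map_sum, map_smul, smul_eq_mul]
    exact Finset.sum_eq_zero fun i hi => by simp [(Finset.mem_filter.1 hi).2]

theorem IsFaceOf.trans_conicSpan {F τ : Set (Fin n → ℚ)} (hF : IsFaceOf F τ)
    (hτ : IsFaceOf τ (conicSpan s f)) : IsFaceOf F (conicSpan s f) := by
  obtain ⟨u, hu, rfl⟩ := hτ
  obtain ⟨u', hu', rfl⟩ := hF
  have hgen : ∀ i ∈ s, 0 ≤ u (f i) := fun i hi => hu _ (mem_conicSpan_of_mem hi)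
  have hgen' : ∀ i ∈ {i ∈ s | u (f i) = 0}, 0 ≤ u' (f i) := fun i hi =>
    hu' _ (by rw [conicSpan_sep_map_eq_zero hgen]; exact mem_conicSpan_of_mem hi)
  rw [conicSpan_sep_map_eq_zero hgen, conicSpan_sep_map_eq_zero hgen', Finset.filter_filter]
  -- for large `N`, `N • u + u'` is positive on generators where `u` is, and equals `u'` elsewhere
  obtain ⟨N, hN⟩ := exists_pos_mul_add_pos s (fun i => u (f i)) (fun i => u' (f i))
  have hw : ∀ i ∈ s, 0 < u (f i) ∨ (u (f i) = 0 ∧ 0 ≤ u' (f i)) := fun i hi =>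
    (hgen i hi).lt_or_eq.imp_right fun h => ⟨h.symm, hgen' i (Finset.mem_filter.2 ⟨hi, h.symm⟩)⟩
  have hw_nonneg : ∀ i ∈ s, 0 ≤ (N • u + u') (f i) := fun i hi => by
    rcases hw i hi with h | ⟨h, h'⟩
    · simpa using (hN i hi h).le
    · simpa [h] using h'
  refine ⟨N • u + u', fun _ => map_nonneg_of_mem_conicSpan hw_nonneg, ?_⟩
  rw [conicSpan_sep_map_eq_zero hw_nonneg]
  refine congrArg (conicSpan · f) (Finset.filter_congr fun i hi => ?_)
  rcases hw i hi with h | ⟨h, -⟩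
  · simpa [h.ne'] using (hN i hi h).ne'
  · simp [h]

end ConicSpan

theorem sub_smul_mem_polyhedralCone_iff {U : Finset (Dual ℚ (Fin n → ℚ))}
    {x a : Fin n → ℚ} {μ : ℚ} :
    x - μ • a ∈ polyhedralCone U ↔ ∀ u ∈ U, μ * u a ≤ u x := by
  simp only [polyhedralCone, Set.mem_ofPred_eq, map_sub, map_smul, smul_eq_mul, sub_nonneg]

open Classical in
noncomputable def fourierMotzkin (U : Finset (Dual ℚ (Fin n → ℚ))) (a : Fin n → ℚ) :
    Finset (Dual ℚ (Fin n → ℚ)) :=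
  {u ∈ U | 0 ≤ u a} ∪
    {p ∈ U ×ˢ U | 0 < p.1 a ∧ p.2 a < 0}.image fun p => p.1 a • p.2 - p.2 a • p.1

theorem mem_polyhedralCone_fourierMotzkin_of_sub_smul_mem
    {U : Finset (Dual ℚ (Fin n → ℚ))} {x a : Fin n → ℚ} {μ : ℚ} (hμ : 0 ≤ μ)
    (hx : x - μ • a ∈ polyhedralCone U) : x ∈ polyhedralCone (fourierMotzkin U a) := by
  classical
  rw [sub_smul_mem_polyhedralCone_iff] at hx
  intro w hw
  rcases Finset.mem_union.1 hw with hw | hw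
  · obtain ⟨hwU, hwa⟩ := Finset.mem_filter.1 hw
    nlinarith [hx w hwU]
  · obtain ⟨⟨p, q⟩, hpq, rfl⟩ := Finset.mem_image.1 hw
    obtain ⟨hpqU, hpa, hqa⟩ := Finset.mem_filter.1 hpq
    obtain ⟨hp, hq⟩ := Finset.mem_product.1 hpqU
    have := hx p hp
    have := hx q hq
    simp only [LinearMap.sub_apply, LinearMap.smul_apply, smul_eq_mul]
    nlinarith

theorem exists_sub_smul_mem_of_mem_polyhedralCone_fourierMotzkin
    {U : Finset (Dual ℚ (Fin n → ℚ))} {x a : Fin n → ℚ}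
    (hx : x ∈ polyhedralCone (fourierMotzkin U a)) :
    ∃ μ : ℚ, 0 ≤ μ ∧ x - μ • a ∈ polyhedralCone U := by
  classical
  have hkept : ∀ u ∈ U, 0 ≤ u a → 0 ≤ u x := fun u hu hua =>
    hx u (Finset.mem_union_left _ (Finset.mem_filter.2 ⟨hu, hua⟩))
  have hcombined : ∀ p ∈ U, ∀ q ∈ U, 0 < p a → q a < 0 → q a * p x ≤ p a * q x := by
    intro p hp q hq hpa hqa
    have := hx _ (Finset.mem_union_right _ (Finset.mem_image.2
      ⟨(p, q), Finset.mem_filter.2 ⟨Finset.mem_product.2 ⟨hp, hq⟩, hpa, hqa⟩, rfl⟩))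
    simp only [LinearMap.sub_apply, LinearMap.smul_apply, smul_eq_mul] at this
    linarith
  -- each `q ∈ U` with `q a < 0` forces `μ ≥ q x / q a`; take the largest of these bounds and `0`
  set lowerBounds : Finset ℚ := insert 0 ({q ∈ U | q a < 0}.image fun q => q x / q a)
  set μ := lowerBounds.max' (Finset.insert_nonempty _ _)
  refine ⟨μ, lowerBounds.le_max' 0 (Finset.mem_insert_self _ _), ?_⟩
  rw [sub_smul_mem_polyhedralCone_iff]
  intro u hu
  rcases lt_trichotomy (u a) 0 with hua | hua | hua
  · have : u x / u a ≤ μ := lowerBounds.le_max' _ (Finset.mem_insert_of_mem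
      (Finset.mem_image_of_mem _ (Finset.mem_filter.2 ⟨hu, hua⟩)))
    rwa [div_le_iff_of_neg hua] at this
  · simpa [hua] using hkept u hu hua.ge
  · have : μ ≤ u x / u a := by
      refine Finset.max'_le _ _ _ fun l hl => ?_
      rcases Finset.mem_insert.1 hl with rfl | hl
      · exact div_nonneg (hkept u hu hua.le) hua.le
      · obtain ⟨q, hq, rfl⟩ := Finset.mem_image.1 hl
        obtain ⟨hqU, hqa⟩ := Finset.mem_filter.1 hq
        rw [div_le_iff_of_neg hqa, div_mul_eq_mul_div, div_le_iff₀ hua]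
        linarith [hcombined u hu q hqU hua hqa]
    rwa [le_div_iff₀ hua] at this

theorem mem_polyhedralCone_fourierMotzkin {U : Finset (Dual ℚ (Fin n → ℚ))}
    {x a : Fin n → ℚ} :
    x ∈ polyhedralCone (fourierMotzkin U a) ↔ ∃ μ : ℚ, 0 ≤ μ ∧ x - μ • a ∈ polyhedralCone U :=
  ⟨exists_sub_smul_mem_of_mem_polyhedralCone_fourierMotzkin,
    fun ⟨_, hμ, hx⟩ => mem_polyhedralCone_fourierMotzkin_of_sub_smul_mem hμ hx⟩

theorem conicSpan_empty {ι : Type*} (f : ι → Fin n → ℚ) : conicSpan ∅ f = {0} := by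
  ext x
  simpa [conicSpan] using fun _ => ⟨0, fun _ => le_rfl⟩

theorem exists_polyhedralCone_eq_zero : ∃ U, polyhedralCone U = {(0 : Fin n → ℚ)} := by
  classical
  let coords : Finset (Dual ℚ (Fin n → ℚ)) := Finset.univ.image LinearMap.proj
  refine ⟨coords ∪ -coords, Set.ext fun x => ⟨fun hx => funext fun i => ?_, ?_⟩⟩
  · have h₁ := hx _ (Finset.mem_union_left _ (Finset.mem_image_of_mem _ (Finset.mem_univ i)))
    have h₂ := hx (-LinearMap.proj i) (Finset.mem_union_right _ (Finset.neg_mem_neg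
      (Finset.mem_image_of_mem _ (Finset.mem_univ i))))
    simp only [LinearMap.neg_apply, LinearMap.proj_apply] at h₁ h₂
    simp only [Pi.zero_apply]
    linarith
  · rintro rfl u -
    simp

/-- One half of the Minkowski–Weyl theorem, by Fourier–Motzkin elimination. -/
theorem exists_polyhedralCone_eq_conicSpan {ι : Type*} (s : Finset ι) (f : ι → Fin n → ℚ) :
    ∃ U, polyhedralCone U = conicSpan s f := by
  classical
  induction s using Finset.induction_on with
  | empty => simpa [conicSpan_empty] using exists_polyhedralCone_eq_zero
  | @insert a s _ ih =>
    obtain ⟨U, hU⟩ := ih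
    refine ⟨fourierMotzkin U (f a), Set.ext fun x => ?_⟩
    rw [mem_polyhedralCone_fourierMotzkin, mem_conicSpan_insert, hU]

theorem exists_mem_ray_add_sep_of_mem_polyhedralCone {U : Finset (Dual ℚ (Fin n → ℚ))}
    {v x : Fin n → ℚ} (hnv : -v ∉ polyhedralCone U)
    (hx : x ∈ polyhedralCone U) :
    ∃ u ∈ U, 0 < u v ∧ x ∈ ray v + {y ∈ polyhedralCone U | u y = 0} := by
  have hpos : {u ∈ U | 0 < u v}.Nonempty := by
    by_contra! h
    refine hnv fun u hu => ?_
    have : ¬ 0 < u v := fun h' => Finset.filter_eq_empty_iff.1 h hu h'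
    simp only [map_neg]
    linarith
  -- walk from `x` along `-v` until the first inequality becomes tight
  obtain ⟨u₀, hu₀, hmin⟩ := Finset.exists_min_image _ (fun u => u x / u v) hpos
  obtain ⟨hu₀U, hu₀v⟩ := Finset.mem_filter.1 hu₀
  set c := u₀ x / u₀ v
  have hxc : x - c • v ∈ polyhedralCone U := by
    rw [sub_smul_mem_polyhedralCone_iff]
    intro u hu
    rcases le_or_gt (u v) 0 with huv | huv
    · nlinarith [hx u hu, div_nonneg (hx u₀ hu₀U) hu₀v.le]
    · have := hmin u (Finset.mem_filter.2 ⟨hu, huv⟩)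
      rwa [le_div_iff₀ huv] at this
  refine ⟨u₀, hu₀U, hu₀v, mem_ray_add.2 ⟨c, div_nonneg (hx u₀ hu₀U) hu₀v.le, x - c • v,
    ⟨hxc, ?_⟩, by abel⟩⟩
  simp [c, div_mul_cancel₀ _ hu₀v.ne']

theorem exists_mem_ray_add_sep_of_mem_conicSpan {ι : Type*} {s : Finset ι}
    {f : ι → Fin n → ℚ} {v x : Fin n → ℚ} (hnv : -v ∉ conicSpan s f)
    (hx : x ∈ conicSpan s f) :
    ∃ u : Dual ℚ (Fin n → ℚ), (∀ y ∈ conicSpan s f, 0 ≤ u y) ∧ 0 < u v ∧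
      x ∈ ray v + {y ∈ conicSpan s f | u y = 0} := by
  obtain ⟨U, hU⟩ := exists_polyhedralCone_eq_conicSpan s f
  rw [← hU] at hnv hx ⊢
  obtain ⟨u, hu, huv, hxu⟩ := exists_mem_ray_add_sep_of_mem_polyhedralCone hnv hx
  exact ⟨u, fun y hy => hy u hu, huv, hxu⟩

section RayAdd

variable {v : Fin n → ℚ} {δ : Set (Fin n → ℚ)} {u : Dual ℚ (Fin n → ℚ)}

theorem IsFaceOf.subset {F C : Set (Fin n → ℚ)} (h : IsFaceOf F C) : F ⊆ C := by
  obtain ⟨u, -, rfl⟩ := h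
  exact fun x hx => hx.1

theorem IsFaceOf.exists_pos_of_notMem {F C : Set (Fin n → ℚ)} (h : IsFaceOf F C) (hv : v ∈ C)
    (hvF : v ∉ F) :
    ∃ u : Dual ℚ (Fin n → ℚ), (∀ x ∈ C, 0 ≤ u x) ∧ 0 < u v ∧ F = {x ∈ C | u x = 0} := by
  obtain ⟨u, hu, rfl⟩ := h
  exact ⟨u, hu, (hu v hv).lt_of_ne fun h => hvF ⟨hv, h.symm⟩, rfl⟩

theorem IsFaceOf.mem_of_add_mem {F C : Set (Fin n → ℚ)} (hF : IsFaceOf F C) {a b : Fin n → ℚ}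
    (ha : a ∈ C) (hb : b ∈ C) (hab : a + b ∈ F) : b ∈ F := by
  obtain ⟨u, hu, rfl⟩ := hF
  have := hu a ha
  have := hu b hb
  exact ⟨hb, by linarith [map_add u a b ▸ hab.2]⟩

theorem ray_add_sep_eq_of_pos (hδ : ∀ b ∈ δ, 0 ≤ u b) (hv : 0 < u v) :
    {x ∈ ray v + δ | u x = 0} = {b ∈ δ | u b = 0} := by
  ext x
  refine ⟨fun ⟨hx, hux⟩ => ?_, fun ⟨hb, hub⟩ => ⟨subset_ray_add δ hb, hub⟩⟩
  obtain ⟨c, hc, b, hb, rfl⟩ := mem_ray_add.1 hx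
  simp only [map_add, map_smul, smul_eq_mul] at hux
  have hub := hδ b hb
  have hc0 : c = 0 := by nlinarith
  subst hc0
  simpa [hb] using hux

theorem ray_add_sep_eq_of_eq_zero (hv : u v = 0) :
    {x ∈ ray v + δ | u x = 0} = ray v + {b ∈ δ | u b = 0} := by
  ext x
  simp only [Set.mem_ofPred_eq, mem_ray_add]
  constructor
  · rintro ⟨⟨c, hc, b, hb, rfl⟩, hx⟩
    exact ⟨c, hc, b, ⟨hb, by simpa [hv] using hx⟩, rfl⟩
  · rintro ⟨c, hc, b, ⟨hb, hub⟩, rfl⟩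
    exact ⟨⟨c, hc, b, hb, rfl⟩, by simp [hv, hub]⟩

theorem IsFaceOf.ray_add {e : Set (Fin n → ℚ)} (he : IsFaceOf e δ) {g : Dual ℚ (Fin n → ℚ)}
    (hg : ∀ b ∈ δ, g b = 0) (hgv : g v ≠ 0) : IsFaceOf (ray v + e) (ray v + δ) := by
  obtain ⟨k, hk, rfl⟩ := he
  -- correct `k` by a multiple of `g` so that it vanishes on `v` but is unchanged on `δ`
  set w := k - (k v / g v) • g
  have hwδ : ∀ b ∈ δ, w b = k b := fun b hb => by simp [w, hg b hb]
  have hwv : w v = 0 := by simp [w, div_mul_cancel₀ _ hgv]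
  refine ⟨w, fun x hx => ?_, ?_⟩
  · obtain ⟨c, -, b, hb, rfl⟩ := mem_ray_add.1 hx
    simpa [hwv, hwδ b hb] using hk b hb
  · rw [ray_add_sep_eq_of_eq_zero hwv]
    congr 1
    ext b
    exact and_congr_right fun hb => by rw [hwδ b hb]

theorem ray_add_conicSpan {ι : Type*} [DecidableEq ι] (s : Finset ι) (f : ι → Fin n → ℚ) (a : ι) :
    ray (f a) + conicSpan s f = conicSpan (insert a s) f := by
  ext x
  rw [mem_ray_add, mem_conicSpan_insert]
  constructor
  · rintro ⟨c, hc, b, hb, rfl⟩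
    exact ⟨c, hc, by simpa using hb⟩
  · rintro ⟨μ, hμ, hx⟩
    exact ⟨μ, hμ, x - μ • f a, hx, by abel⟩

end RayAdd

theorem IsRatPolyCone.exists_eq_conicSpan {σ : Set (Fin n → ℚ)} (h : IsRatPolyCone σ) :
    ∃ s : Finset (Fin n → ℤ), σ = conicSpan s castVec :=
  h.1

theorem IsRatPolyCone.ray_add {τ δ : Set (Fin n → ℚ)} (hτ : IsRatPolyCone τ) (vz : Fin n → ℤ)
    {s : Finset (Fin n → ℤ)} (hδ : δ = conicSpan s castVec) (hsub : ray (castVec vz) + δ ⊆ τ) :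
    IsRatPolyCone (ray (castVec vz) + δ) := by
  classical
  exact ⟨⟨insert vz s, by rw [hδ, ray_add_conicSpan]; rfl⟩,
    fun x hx hnx => hτ.2 x (hsub hx) (hsub hnx)⟩

def stellarSubdivision (S : Set (Set (Fin n → ℚ))) (v : Fin n → ℚ) : Set (Set (Fin n → ℚ)) :=
  {σ | σ ∈ S ∧ v ∉ σ} ∪ {c | ∃ τ ∈ S, v ∈ τ ∧ ∃ δ, IsFaceOf δ τ ∧ v ∉ δ ∧ c = ray v + δ}

namespace IsFan

variable {S : Set (Set (Fin n → ℚ))} {v : Fin n → ℚ}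

theorem isRatPolyCone (hS : IsFan S) {σ : Set (Fin n → ℚ)} (hσ : σ ∈ S) : IsRatPolyCone σ :=
  hS.2.1 σ hσ

theorem inter_isFaceOf_left (hS : IsFan S) {σ τ : Set (Fin n → ℚ)} (hσ : σ ∈ S) (hτ : τ ∈ S) :
    IsFaceOf (σ ∩ τ) σ :=
  (hS.2.2.2 σ hσ τ hτ).1

theorem inter_isFaceOf_right (hS : IsFan S) {σ τ : Set (Fin n → ℚ)} (hσ : σ ∈ S) (hτ : τ ∈ S) :
    IsFaceOf (σ ∩ τ) τ :=
  (hS.2.2.2 σ hσ τ hτ).2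

theorem exists_eq_conicSpan (hS : IsFan S) {σ : Set (Fin n → ℚ)} (hσ : σ ∈ S) :
    ∃ s : Finset (Fin n → ℤ), σ = conicSpan s castVec :=
  (hS.isRatPolyCone hσ).exists_eq_conicSpan

theorem zero_mem (hS : IsFan S) {σ : Set (Fin n → ℚ)} (hσ : σ ∈ S) : (0 : Fin n → ℚ) ∈ σ := by
  obtain ⟨s, rfl⟩ := hS.exists_eq_conicSpan hσ
  exact zero_mem_conicSpan

theorem mem_of_isFaceOf (hS : IsFan S) {σ F : Set (Fin n → ℚ)} (hσ : σ ∈ S) (hF : IsFaceOf F σ) :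
    F ∈ S :=
  hS.2.2.1 σ hσ F hF

theorem ray_subset_iff (hS : IsFan S) {σ : Set (Fin n → ℚ)} (hσ : σ ∈ S) : ray v ⊆ σ ↔ v ∈ σ := by
  obtain ⟨s, rfl⟩ := hS.exists_eq_conicSpan hσ
  exact ⟨fun h => h (mem_ray_self v), ray_subset_conicSpan⟩

theorem ray_add_subset (hS : IsFan S) {τ δ : Set (Fin n → ℚ)} (hτ : τ ∈ S) (hv : v ∈ τ)
    (hδ : δ ⊆ τ) : ray v + δ ⊆ τ := by
  obtain ⟨s, rfl⟩ := hS.exists_eq_conicSpan hτ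
  exact ray_add_subset_conicSpan hv hδ

theorem isFaceOf_trans (hS : IsFan S) {τ δ F : Set (Fin n → ℚ)} (hτ : τ ∈ S) (hF : IsFaceOf F δ)
    (hδ : IsFaceOf δ τ) : IsFaceOf F τ := by
  obtain ⟨s, rfl⟩ := hS.exists_eq_conicSpan hτ
  exact hF.trans_conicSpan hδ

theorem exists_superset_of_mem_stellarSubdivision (hS : IsFan S) {σ' : Set (Fin n → ℚ)}
    (h : σ' ∈ stellarSubdivision S v) : ∃ σ ∈ S, σ' ⊆ σ := by
  rcases h with ⟨hσ, -⟩ | ⟨τ, hτ, hv, δ, hδ, -, rfl⟩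
  · exact ⟨σ', hσ, subset_rfl⟩
  · exact ⟨τ, hτ, hS.ray_add_subset hτ hv hδ.subset⟩

theorem sUnion_stellarSubdivision (hS : IsFan S) (hv : v ≠ 0) :
    ⋃₀ stellarSubdivision S v = ⋃₀ S := by
  refine subset_antisymm (Set.sUnion_subset fun σ' hσ' => ?_) fun x ⟨σ, hσ, hx⟩ => ?_
  · obtain ⟨σ, hσ, hsub⟩ := hS.exists_superset_of_mem_stellarSubdivision hσ'
    exact hsub.trans (Set.subset_sUnion_of_mem hσ)
  by_cases hvσ : v ∈ σ
  · have hnv : -v ∉ σ := fun h => hv ((hS.isRatPolyCone hσ).2 v hvσ h)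
    obtain ⟨s, rfl⟩ := hS.exists_eq_conicSpan hσ
    obtain ⟨u, hu, huv, hxu⟩ := exists_mem_ray_add_sep_of_mem_conicSpan hnv hx
    exact ⟨_, Or.inr ⟨_, hσ, hvσ, _, ⟨u, hu, rfl⟩, fun h => huv.ne' h.2, rfl⟩, hxu⟩
  · exact ⟨σ, Or.inl ⟨hσ, hvσ⟩, hx⟩

theorem stellarSubdivision_finite (hS : IsFan S) : (stellarSubdivision S v).Finite := by
  refine (hS.1.subset fun σ h => h.1).union ((hS.1.image (ray v + ·)).subset ?_)
  rintro _ ⟨τ, hτ, -, δ, hδ, -, rfl⟩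
  exact ⟨δ, hS.mem_of_isFaceOf hτ hδ, rfl⟩

theorem isRatPolyCone_of_mem_stellarSubdivision (hS : IsFan S) (vz : Fin n → ℤ)
    {σ' : Set (Fin n → ℚ)} (h : σ' ∈ stellarSubdivision S (castVec vz)) : IsRatPolyCone σ' := by
  rcases h with ⟨hσ, -⟩ | ⟨τ, hτ, hv, δ, hδ, -, rfl⟩
  · exact hS.isRatPolyCone hσ
  · obtain ⟨s, hs⟩ := hS.exists_eq_conicSpan (hS.mem_of_isFaceOf hτ hδ)
    exact (hS.isRatPolyCone hτ).ray_add vz hs (hS.ray_add_subset hτ hv hδ.subset)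

theorem isFaceOf_mem_stellarSubdivision (hS : IsFan S) {σ' F : Set (Fin n → ℚ)}
    (h : σ' ∈ stellarSubdivision S v) (hF : IsFaceOf F σ') : F ∈ stellarSubdivision S v := by
  rcases h with ⟨hσ, hvσ⟩ | ⟨τ, hτ, hvτ, δ, hδ, hvδ, rfl⟩
  · exact Or.inl ⟨hS.mem_of_isFaceOf hσ hF, fun h => hvσ (hF.subset h)⟩
  obtain ⟨w, hw, rfl⟩ := hF
  have hwδ : ∀ b ∈ δ, 0 ≤ w b := fun b hb => hw b (subset_ray_add δ hb)
  have hδ' : IsFaceOf {b ∈ δ | w b = 0} τ := hS.isFaceOf_trans hτ ⟨w, hwδ, rfl⟩ hδ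
  have hv : v ∈ ray v + δ := by
    simpa using Set.add_mem_add (mem_ray_self v) (hS.zero_mem (hS.mem_of_isFaceOf hτ hδ))
  rcases (hw v hv).lt_or_eq with hwv | hwv
  · rw [ray_add_sep_eq_of_pos hwδ hwv]
    exact Or.inl ⟨hS.mem_of_isFaceOf hτ hδ', fun h => hwv.ne' h.2⟩
  · rw [ray_add_sep_eq_of_eq_zero hwv.symm]
    exact Or.inr ⟨τ, hτ, hvτ, _, hδ', fun h => hvδ h.1, rfl⟩

theorem isFaceOf_inter_ray_add (hS : IsFan S) {σ τ δ : Set (Fin n → ℚ)} (hσ : σ ∈ S)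
    (hvσ : v ∉ σ) (hτ : τ ∈ S) (hvτ : v ∈ τ) (hδ : IsFaceOf δ τ) :
    IsFaceOf (σ ∩ (ray v + δ)) σ ∧ IsFaceOf (σ ∩ (ray v + δ)) (ray v + δ) := by
  obtain ⟨u, hu, huv, hστ⟩ :=
    (hS.inter_isFaceOf_right hσ hτ).exists_pos_of_notMem hvτ fun h => hvσ h.1
  have hsub := hS.ray_add_subset hτ hvτ hδ.subset
  have hcut : σ ∩ (ray v + δ) = {x ∈ ray v + δ | u x = 0} := Set.inter_eq_sep_of_subset hστ hsub
  have hσδ : σ ∩ (ray v + δ) = σ ∩ δ := by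
    rw [hcut, ray_add_sep_eq_of_pos (fun b hb => hu b (hδ.subset hb)) huv,
      Set.inter_eq_sep_of_subset hστ hδ.subset]
  exact ⟨hσδ ▸ hS.inter_isFaceOf_left hσ (hS.mem_of_isFaceOf hτ hδ),
    u, fun x hx => hu x (hsub hx), hcut⟩

theorem le_of_smul_add_eq_smul_add (hS : IsFan S) {τ₁ τ₂ δ₁ δ₂ : Set (Fin n → ℚ)}
    (hτ₁ : τ₁ ∈ S) (hτ₂ : τ₂ ∈ S) (hv₁ : v ∈ τ₁) (hv₂ : v ∈ τ₂) (hδ₁ : IsFaceOf δ₁ τ₁)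
    (hvδ₁ : v ∉ δ₁) (hδ₂ : δ₂ ⊆ τ₂) {c₁ c₂ : ℚ} {b₁ b₂ : Fin n → ℚ} (hc₁ : 0 ≤ c₁) (hc₂ : 0 ≤ c₂)
    (hb₁ : b₁ ∈ δ₁) (hb₂ : b₂ ∈ δ₂) (h : c₁ • v + b₁ = c₂ • v + b₂) : c₂ ≤ c₁ := by
  have hπ₁ := hS.inter_isFaceOf_left hτ₁ hτ₂
  have hπ₂ := hS.inter_isFaceOf_right hτ₁ hτ₂
  have hx : c₁ • v + b₁ ∈ τ₁ ∩ τ₂ :=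
    ⟨hS.ray_add_subset hτ₁ hv₁ hδ₁.subset (mem_ray_add.2 ⟨c₁, hc₁, b₁, hb₁, rfl⟩),
      h ▸ hS.ray_add_subset hτ₂ hv₂ hδ₂ (mem_ray_add.2 ⟨c₂, hc₂, b₂, hb₂, rfl⟩)⟩
  have hb₁π : b₁ ∈ τ₁ ∩ τ₂ :=
    hπ₁.mem_of_add_mem ((hS.ray_subset_iff hτ₁).2 hv₁ ⟨c₁, hc₁, rfl⟩) (hδ₁.subset hb₁) hx
  have hb₂π : b₂ ∈ τ₁ ∩ τ₂ :=
    hπ₂.mem_of_add_mem ((hS.ray_subset_iff hτ₂).2 hv₂ ⟨c₂, hc₂, rfl⟩) (hδ₂ hb₂) (h ▸ hx)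
  -- a functional cutting out the face `δ₁ ∩ τ₁ ∩ τ₂` of `τ₁ ∩ τ₂` separates `b₁` from `v`
  obtain ⟨w, hw, hwv, hδπ⟩ := (hS.inter_isFaceOf_right (hS.mem_of_isFaceOf hτ₁ hδ₁)
    (hS.mem_of_isFaceOf hτ₁ hπ₁)).exists_pos_of_notMem ⟨hv₁, hv₂⟩ fun h => hvδ₁ h.1
  have hwb₁ : w b₁ = 0 := (hδπ ▸ ⟨hb₁, hb₁π⟩ : b₁ ∈ {x ∈ τ₁ ∩ τ₂ | w x = 0}).2
  have := congrArg w h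
  simp only [map_add, map_smul, smul_eq_mul, hwb₁, add_zero] at this
  nlinarith [hw b₂ hb₂π]

theorem ray_add_inter_ray_add (hS : IsFan S) {τ₁ τ₂ δ₁ δ₂ : Set (Fin n → ℚ)}
    (hτ₁ : τ₁ ∈ S) (hv₁ : v ∈ τ₁) (hδ₁ : IsFaceOf δ₁ τ₁) (hvδ₁ : v ∉ δ₁)
    (hτ₂ : τ₂ ∈ S) (hv₂ : v ∈ τ₂) (hδ₂ : IsFaceOf δ₂ τ₂) (hvδ₂ : v ∉ δ₂) :
    (ray v + δ₁) ∩ (ray v + δ₂) = ray v + δ₁ ∩ δ₂ := by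
  refine subset_antisymm (fun x ⟨hx₁, hx₂⟩ => ?_) (Set.subset_inter
    (Set.add_subset_add_left Set.inter_subset_left)
    (Set.add_subset_add_left Set.inter_subset_right))
  obtain ⟨c₁, hc₁, b₁, hb₁, rfl⟩ := mem_ray_add.1 hx₁
  obtain ⟨c₂, hc₂, b₂, hb₂, h⟩ := mem_ray_add.1 hx₂
  obtain rfl : c₁ = c₂ := le_antisymm
    (hS.le_of_smul_add_eq_smul_add hτ₂ hτ₁ hv₂ hv₁ hδ₂ hvδ₂ hδ₁.subset hc₂ hc₁ hb₂ hb₁ h.symm)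
    (hS.le_of_smul_add_eq_smul_add hτ₁ hτ₂ hv₁ hv₂ hδ₁ hvδ₁ hδ₂.subset hc₁ hc₂ hb₁ hb₂ h)
  obtain rfl := add_left_cancel h
  exact mem_ray_add.2 ⟨c₁, hc₁, b₁, ⟨hb₁, hb₂⟩, rfl⟩

theorem isFaceOf_ray_add_inter_ray_add (hS : IsFan S) {τ₁ τ₂ δ₁ δ₂ : Set (Fin n → ℚ)}
    (hτ₁ : τ₁ ∈ S) (hv₁ : v ∈ τ₁) (hδ₁ : IsFaceOf δ₁ τ₁) (hvδ₁ : v ∉ δ₁)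
    (hτ₂ : τ₂ ∈ S) (hv₂ : v ∈ τ₂) (hδ₂ : IsFaceOf δ₂ τ₂) (hvδ₂ : v ∉ δ₂) :
    IsFaceOf ((ray v + δ₁) ∩ (ray v + δ₂)) (ray v + δ₁) := by
  rw [hS.ray_add_inter_ray_add hτ₁ hv₁ hδ₁ hvδ₁ hτ₂ hv₂ hδ₂ hvδ₂]
  obtain ⟨g, -, hgv, hδ₁g⟩ := hδ₁.exists_pos_of_notMem hv₁ hvδ₁
  refine (hS.inter_isFaceOf_left (hS.mem_of_isFaceOf hτ₁ hδ₁) (hS.mem_of_isFaceOf hτ₂ hδ₂)).ray_add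
    (g := g) (fun b hb => ?_) hgv.ne'
  rw [hδ₁g] at hb
  exact hb.2

theorem isFaceOf_inter_of_mem_stellarSubdivision (hS : IsFan S) {σ₁ σ₂ : Set (Fin n → ℚ)}
    (h₁ : σ₁ ∈ stellarSubdivision S v) (h₂ : σ₂ ∈ stellarSubdivision S v) :
    IsFaceOf (σ₁ ∩ σ₂) σ₁ := by
  rcases h₁ with ⟨hσ₁, hvσ₁⟩ | ⟨τ₁, hτ₁, hv₁, δ₁, hδ₁, hvδ₁, rfl⟩ <;>
    rcases h₂ with ⟨hσ₂, hvσ₂⟩ | ⟨τ₂, hτ₂, hv₂, δ₂, hδ₂, hvδ₂, rfl⟩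
  · exact hS.inter_isFaceOf_left hσ₁ hσ₂
  · exact (hS.isFaceOf_inter_ray_add hσ₁ hvσ₁ hτ₂ hv₂ hδ₂).1
  · exact Set.inter_comm σ₂ _ ▸ (hS.isFaceOf_inter_ray_add hσ₂ hvσ₂ hτ₁ hv₁ hδ₁).2
  · exact hS.isFaceOf_ray_add_inter_ray_add hτ₁ hv₁ hδ₁ hvδ₁ hτ₂ hv₂ hδ₂ hvδ₂

theorem isFan_stellarSubdivision (hS : IsFan S) (vz : Fin n → ℤ) :
    IsFan (stellarSubdivision S (castVec vz)) :=
  ⟨hS.stellarSubdivision_finite, fun _ => hS.isRatPolyCone_of_mem_stellarSubdivision vz,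
    fun _ h _ => hS.isFaceOf_mem_stellarSubdivision h,
    fun _ h₁ _ h₂ => ⟨hS.isFaceOf_inter_of_mem_stellarSubdivision h₁ h₂,
      Set.inter_comm _ _ ▸ hS.isFaceOf_inter_of_mem_stellarSubdivision h₂ h₁⟩⟩

theorem stellarSubdivision_eq (hS : IsFan S) (v : Fin n → ℚ) :
    {σ | σ ∈ S ∧ ¬ ray v ⊆ σ} ∪
      {c | ∃ τ ∈ S, ray v ⊆ τ ∧ ∃ δ : Set (Fin n → ℚ), IsFaceOf δ τ ∧ ¬ ray v ⊆ δ ∧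
        c = {x | ∃ a ∈ ray v, ∃ b ∈ δ, x = a + b}} = stellarSubdivision S v := by
  have hadd : ∀ δ : Set (Fin n → ℚ), {x | ∃ a ∈ ray v, ∃ b ∈ δ, x = a + b} = ray v + δ :=
    fun δ => Set.ext fun x => by simp only [Set.mem_add, eq_comm, Set.mem_ofPred_eq]
  ext σ'
  refine or_congr (and_congr_right fun hσ => not_congr (hS.ray_subset_iff hσ)) ?_
  refine exists_congr fun τ => and_congr_right fun hτ => and_congr (hS.ray_subset_iff hτ) ?_
  refine exists_congr fun δ => and_congr_right fun hδ => ?_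
  rw [hS.ray_subset_iff (hS.mem_of_isFaceOf hτ hδ), hadd]

end IsFan

end

theorem stellar_subdivision_is_fan_general {n : ℕ}
    (S : Set (Set (Fin n → ℚ))) (hS : IsFan S)
    (ρ : Set (Fin n → ℚ)) (hρ : IsRay ρ)
    (S' : Set (Set (Fin n → ℚ)))
    (hS' : S' = {σ | σ ∈ S ∧ ¬ ρ ⊆ σ} ∪
      {c | ∃ τ ∈ S, ρ ⊆ τ ∧ ∃ δ : Set (Fin n → ℚ), IsFaceOf δ τ ∧ ¬ ρ ⊆ δ ∧
        c = {x | ∃ a ∈ ρ, ∃ b ∈ δ, x = a + b}}) :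
    IsFan S' ∧ ⋃₀ S' = ⋃₀ S ∧ ∀ σ' ∈ S', ∃ σ ∈ S, σ' ⊆ σ := by
  obtain ⟨vz, hvz, rfl⟩ := hρ
  obtain rfl : S' = stellarSubdivision S (castVec vz) := hS'.trans (hS.stellarSubdivision_eq _)
  exact ⟨hS.isFan_stellarSubdivision vz, hS.sUnion_stellarSubdivision hvz,
    fun _ => hS.exists_superset_of_mem_stellarSubdivision⟩

/-- Stellar subdivision: if `ρ` is a ray in the support of a fan `S` but not a
cone of `S`, then replacing every cone `τ ⊇ ρ` by the cones `ρ + δ`, for `δ` a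
face of `τ` not containing `ρ` (and keeping all cones not containing `ρ`),
yields a fan with the same support, each of whose cones is contained in a cone
of `S`. -/
theorem stellar_subdivision_is_fan {n : ℕ}
    (S : Set (Set (Fin n → ℚ))) (hS : IsFan S)
    (ρ : Set (Fin n → ℚ)) (hρ : IsRay ρ) (hsupp : ρ ⊆ ⋃₀ S) (hnew : ρ ∉ S)
    (S' : Set (Set (Fin n → ℚ)))
    (hS' : S' = {σ | σ ∈ S ∧ ¬ ρ ⊆ σ} ∪
      {c | ∃ τ ∈ S, ρ ⊆ τ ∧ ∃ δ : Set (Fin n → ℚ), IsFaceOf δ τ ∧ ¬ ρ ⊆ δ ∧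
        c = {x | ∃ a ∈ ρ, ∃ b ∈ δ, x = a + b}}) :
    IsFan S' ∧ ⋃₀ S' = ⋃₀ S ∧ ∀ σ' ∈ S', ∃ σ ∈ S, σ' ⊆ σ :=
  stellar_subdivision_is_fan_general S hS ρ hρ S' hS'
end

section
/- Let σ be a simplicial cone in a lattice N generated by primitive vectors v₁,…,v_d, with multiplicity m₀ (the index of ℤv₁+⋯+ℤv_d in N ∩ span(σ)). Let v₀ be a primitive lattice point in the interior of σ, and for 1 ≤ i ≤ d let mᵢ be the multiplicity of the cone generated by v₀, v₁, …, v̂ᵢ, …, v_d. If v₀ = Σᵢ cᵢ vᵢ with cᵢ > 0 rational, then mᵢ = cᵢ m₀ for each 1 ≤ i ≤ d; in particular m₀ v₀ = Σᵢ mᵢ vᵢ. -/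
/-- Coordinatewise cast `ℤⁿ → ℚⁿ` as an additive homomorphism. -/
def castHom (n : ℕ) : (Fin n → ℤ) →+ (Fin n → ℚ) where
  toFun x := fun i => (x i : ℚ)
  map_zero' := by funext i; simp
  map_add' x y := by funext i; simp

/-- The multiplicity of the simplicial cone generated by `w₁, …, w_d`: the index
of `ℤw₁ + ⋯ + ℤw_d` in `N ∩ span_ℚ(w₁,…,w_d)`. -/
noncomputable def coneMult {n d : ℕ} (w : Fin d → (Fin n → ℤ)) : ℕ :=
  AddSubgroup.relIndex (AddSubgroup.closure (Set.range w))
    (AddSubgroup.comap (castHom n)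
      (Submodule.span ℚ (Set.range fun j => castHom n (w j))).toAddSubgroup)

/-- A primitive lattice vector: nonzero, and not a nonunit integer multiple of
another lattice vector. -/
def Primitive {n : ℕ} (x : Fin n → ℤ) : Prop :=
  x ≠ 0 ∧ ∀ (a : ℤ) (y : Fin n → ℤ), x = a • y → IsUnit a

namespace MultAux

lemma castHom_injective (n : ℕ) : Function.Injective (castHom n) := by
  intro x y h
  funext i
  have h' : (x i : ℚ) = (y i : ℚ) := congrFun h i
  exact_mod_cast h'

lemma cast_sum_smul {n d : ℕ} (a : Fin d → ℤ) (w : Fin d → (Fin n → ℤ)) :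
    castHom n (∑ j, a j • w j) = ∑ j, (a j : ℚ) • castHom n (w j) := by
  rw [map_sum]
  exact Finset.sum_congr rfl fun j _ => by
    rw [map_zsmul, Int.cast_smul_eq_zsmul]

lemma mem_closure_iff {n d : ℕ} (w : Fin d → (Fin n → ℤ)) (x : Fin n → ℤ) :
    x ∈ AddSubgroup.closure (Set.range w) ↔ ∃ a : Fin d → ℤ, ∑ j, a j • w j = x := by
  rw [← Submodule.span_int_eq_addSubgroupClosure, Submodule.mem_toAddSubgroup]
  exact Submodule.mem_span_range_iff_exists_fun ℤ

/-- addOrderOf from a divisibility characterization of the period set. -/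
lemma order_of_char {H : Type*} [AddCommGroup H] (x : H) (e : ℕ) (he : 0 < e)
    (h : ∀ k : ℤ, k • x = 0 ↔ (e : ℤ) ∣ k) : addOrderOf x = e := by
  have h1 : e • x = 0 := by
    have := (h e).mpr dvd_rfl
    simpa [natCast_zsmul] using this
  have h2 : addOrderOf x ∣ e := addOrderOf_dvd_of_nsmul_eq_zero h1
  have h3 : (e : ℤ) ∣ (addOrderOf x : ℤ) := by
    refine (h _).mp ?_
    rw [natCast_zsmul]
    exact addOrderOf_nsmul_eq_zero x
  exact Nat.dvd_antisymm h2 (Int.ofNat_dvd.mp h3)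

lemma relindex_sup_closure_singleton {H : Type*} [AddCommGroup H] (A : AddSubgroup H) (g : H) :
    A.relIndex (A ⊔ AddSubgroup.closure {g}) = addOrderOf ((QuotientAddGroup.mk' A) g) := by
  have h1 : A.relIndex (A ⊔ AddSubgroup.closure {g}) =
      Nat.card ((A ⊔ AddSubgroup.closure {g}).map (QuotientAddGroup.mk' A)) := by
    have h := AddSubgroup.relIndex_ker (A ⊔ AddSubgroup.closure {g}) (QuotientAddGroup.mk' A)
    rwa [QuotientAddGroup.ker_mk'] at h
  rw [h1, AddSubgroup.map_sup, QuotientAddGroup.map_mk'_self, AddMonoidHom.map_closure,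
    Set.image_singleton, bot_sup_eq, ← AddSubgroup.zmultiples_eq_closure]
  exact Nat.card_zmultiples _

end MultAux

/-- Let `σ` be a simplicial cone generated by primitive vectors `v₁,…,v_d` with
multiplicity `m₀`, let `v₀` be a primitive lattice point in the interior of
`σ`, say `v₀ = Σᵢ cᵢvᵢ` with all `cᵢ > 0`, and let `mᵢ` be the multiplicity of
the cone generated by `v₀, v₁, …, v̂ᵢ, …, v_d`.  Then `mᵢ = cᵢ m₀` for each
`i`, and consequently `m₀ v₀ = Σᵢ mᵢ vᵢ`. -/
theorem multiplicity_relation {n d : ℕ}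
    (v : Fin d → (Fin n → ℤ))
    (hind : LinearIndependent ℚ (fun j => castHom n (v j)))
    (hprim : ∀ i, Primitive (v i))
    (v₀ : Fin n → ℤ) (hprim₀ : Primitive v₀)
    (c : Fin d → ℚ) (hc : ∀ i, 0 < c i)
    (hv₀ : castHom n v₀ = ∑ i, c i • castHom n (v i)) :
    (∀ i, ((coneMult (Function.update v i v₀) : ℚ) = c i * (coneMult v : ℚ))) ∧
    (coneMult v : ℤ) • v₀ = ∑ i, (coneMult (Function.update v i v₀) : ℤ) • v i := by
  classical
  set e : Fin d → (Fin n → ℚ) := fun j => castHom n (v j) with he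
  -- coefficient extraction
  have coeff_eq : ∀ a b : Fin d → ℚ, ∑ j, a j • e j = ∑ j, b j • e j → a = b := by
    intro a b h
    funext j
    have h0 : ∑ l, (a - b) l • e l = 0 := by
      simp only [Pi.sub_apply, sub_smul, Finset.sum_sub_distrib, h, sub_self]
    have := Fintype.linearIndependent_iff.mp hind (a - b) h0 j
    simpa [sub_eq_zero] using this
  -- the minimal positive common denominator q
  set P : ℕ → Prop := fun k => 0 < k ∧ ∀ j, ∃ m : ℤ, (k : ℚ) * c j = m with hP
  have hPex : ∃ k, P k := by
    refine ⟨∏ j, (c j).den, Finset.prod_pos fun j _ => (c j).pos, fun j => ?_⟩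
    refine ⟨(c j).num * ∏ l ∈ Finset.univ.erase j, ((c l).den : ℤ), ?_⟩
    rw [← Finset.mul_prod_erase Finset.univ (fun l => (c l).den) (Finset.mem_univ j)]
    push_cast
    rw [mul_comm ((c j).den : ℚ), mul_assoc, mul_comm ((c j).den : ℚ) (c j),
      Rat.mul_den_eq_num]
    ring
  set q : ℕ := Nat.find hPex with hq
  obtain ⟨hqpos, hqint⟩ : P q := Nat.find_spec hPex
  -- the set of k with all k * c j integral is exactly the multiples of q
  have Sdvd : ∀ k : ℤ, (∀ j, ∃ m : ℤ, (k : ℚ) * c j = m) ↔ (q : ℤ) ∣ k := by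
    intro k
    constructor
    · intro hk
      have hmod : ∀ j, ∃ m : ℤ, ((k % q : ℤ) : ℚ) * c j = m := by
        intro j
        obtain ⟨m1, hm1⟩ := hk j
        obtain ⟨m2, hm2⟩ := hqint j
        refine ⟨m1 - (k / q) * m2, ?_⟩
        have : (k % q : ℤ) = k - q * (k / q) := by rw [Int.emod_def]
        rw [this]
        push_cast
        rw [sub_mul, hm1, mul_assoc, mul_comm ((k/q : ℤ) : ℚ), ← mul_assoc, hm2]
        push_cast; ring
      by_contra hdvd
      have hr0 : k % q ≠ 0 := fun h => hdvd (Int.dvd_of_emod_eq_zero h)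
      have hrpos : 0 < k % q := lt_of_le_of_ne (Int.emod_nonneg k (by exact_mod_cast hqpos.ne')) (Ne.symm hr0)
      have hrlt : k % q < q := Int.emod_lt_of_pos k (by exact_mod_cast hqpos)
      have : P (k % q).toNat := by
        constructor
        · omega
        · intro j
          obtain ⟨m, hm⟩ := hmod j
          refine ⟨m, ?_⟩
          have hcast : (((k % (q : ℤ)).toNat : ℕ) : ℚ) = ((k % (q : ℤ) : ℤ) : ℚ) := by
            exact_mod_cast congrArg (fun z : ℤ => (z : ℚ)) (Int.toNat_of_nonneg hrpos.le)
          rw [hcast, hm]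
      exact Nat.find_min hPex (by omega) this
    · rintro ⟨t, rfl⟩
      intro j
      obtain ⟨m, hm⟩ := hqint j
      exact ⟨m * t, by push_cast; rw [mul_comm (q:ℚ) (t:ℚ), mul_assoc, hm]; push_cast; ring⟩
  -- ambient lattice L
  set V : Submodule ℚ (Fin n → ℚ) := Submodule.span ℚ (Set.range e) with hV
  set L : AddSubgroup (Fin n → ℤ) := AddSubgroup.comap (castHom n) V.toAddSubgroup with hL
  set A : AddSubgroup (Fin n → ℤ) := AddSubgroup.closure (Set.range v) with hA
  set B : AddSubgroup (Fin n → ℤ) := A ⊔ AddSubgroup.closure {v₀} with hB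
  have hv₀L : v₀ ∈ L := by
    simp only [hL, AddSubgroup.mem_comap, Submodule.mem_toAddSubgroup, hv₀]
    exact Submodule.sum_mem _ fun j _ => Submodule.smul_mem _ _ (Submodule.subset_span ⟨j, rfl⟩)
  have hvL : ∀ j, v j ∈ L := fun j => by
    simp only [hL, AddSubgroup.mem_comap, Submodule.mem_toAddSubgroup]
    exact Submodule.subset_span ⟨j, rfl⟩
  have hAB : A ≤ B := le_sup_left
  have hBL : B ≤ L := by
    refine sup_le ?_ ?_
    · rw [hA, AddSubgroup.closure_le]
      rintro x ⟨j, rfl⟩; exact hvL j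
    · rw [AddSubgroup.closure_le, Set.singleton_subset_iff]
      exact hv₀L
  -- k • v₀ ∈ A iff all k * c j integral
  have memA_iff : ∀ k : ℤ, k • v₀ ∈ A ↔ ∀ j, ∃ m : ℤ, (k : ℚ) * c j = m := by
    intro k
    rw [hA, MultAux.mem_closure_iff]
    constructor
    · rintro ⟨a, ha⟩
      have : ∑ j, (a j : ℚ) • e j = ∑ j, ((k : ℚ) * c j) • e j := by
        rw [← MultAux.cast_sum_smul, ha, map_zsmul, ← Int.cast_smul_eq_zsmul ℚ, hv₀,
          Finset.smul_sum]
        exact Finset.sum_congr rfl fun j _ => by rw [smul_smul]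
      intro j
      exact ⟨a j, by rw [← congrFun (coeff_eq _ _ this) j]⟩
    · intro hk
      choose m hm using hk
      refine ⟨m, MultAux.castHom_injective n ?_⟩
      rw [MultAux.cast_sum_smul, map_zsmul, ← Int.cast_smul_eq_zsmul ℚ, hv₀, Finset.smul_sum]
      exact Finset.sum_congr rfl fun j _ => by rw [smul_smul, hm j]
  -- order of v₀ in L/A is q
  have hordA : addOrderOf ((QuotientAddGroup.mk' A) v₀) = q := by
    refine MultAux.order_of_char _ _ hqpos fun k => ?_
    rw [← map_zsmul, QuotientAddGroup.mk'_apply, QuotientAddGroup.eq_zero_iff, memA_iff, Sdvd]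
  have hrelA : A.relIndex B = q := by
    rw [hB, MultAux.relindex_sup_closure_singleton, hordA]
  set u : Fin n → ℚ := castHom n v₀ with hu
  have hu2 : u = ∑ l, c l • e l := hv₀
  have huV : u ∈ V := by
    rw [hu2]
    exact Submodule.sum_mem _ fun j _ => Submodule.smul_mem _ _ (Submodule.subset_span ⟨j, rfl⟩)
  set r : ℕ := B.relIndex L with hr
  have hm0 : coneMult v = q * r := by
    have h0 : coneMult v = A.relIndex L := rfl
    rw [h0, ← AddSubgroup.relIndex_mul_relIndex A B L hAB hBL, hrelA]
  -- the per-index statement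
  have part1 : ∀ i, ((coneMult (Function.update v i v₀) : ℚ) = c i * (coneMult v : ℚ)) := by
    intro i
    set Ai : AddSubgroup (Fin n → ℤ) :=
      AddSubgroup.closure (Set.range (Function.update v i v₀)) with hAi
    have hupdate_cast : (fun j => castHom n (Function.update v i v₀ j))
        = Function.update e i u := by
      funext j
      exact Function.apply_update (fun _ x => castHom n x) v i v₀ j
    -- the span of the updated family is still V
    have hspan : Submodule.span ℚ (Set.range (Function.update e i u)) = V := by
      apply le_antisymm
      · rw [Submodule.span_le]
        rintro x ⟨j, rfl⟩
        rcases eq_or_ne j i with rfl | hj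
        · rw [Function.update_self]; exact huV
        · rw [Function.update_of_ne hj]
          exact Submodule.subset_span ⟨j, rfl⟩
      · rw [Submodule.span_le]
        rintro x ⟨j, rfl⟩
        rcases eq_or_ne j i with rfl | hj
        · have huW : u ∈ Submodule.span ℚ (Set.range (Function.update e j u)) :=
            Submodule.subset_span ⟨j, Function.update_self _ _ _⟩
          have hejW : ∀ l, l ≠ j → e l ∈ Submodule.span ℚ (Set.range (Function.update e j u)) :=
            fun l hl => Submodule.subset_span ⟨l, Function.update_of_ne hl _ _⟩
          have hsum : c j • e j = u - ∑ l ∈ Finset.univ.erase j, c l • e l := by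
            rw [hu2, ← Finset.add_sum_erase _ _ (Finset.mem_univ j)]
            abel
          have he1 : e j = (c j)⁻¹ • (c j • e j) := (inv_smul_smul₀ (hc j).ne' _).symm
          rw [he1, hsum]
          exact Submodule.smul_mem _ _ (Submodule.sub_mem _ huW (Submodule.sum_mem _
            fun l hl => Submodule.smul_mem _ _ (hejW l (Finset.ne_of_mem_erase hl))))
        · exact Submodule.subset_span ⟨j, Function.update_of_ne hj _ _⟩
    have hconei : coneMult (Function.update v i v₀) = Ai.relIndex L := by
      unfold coneMult
      rw [show (Set.range fun j => castHom n (Function.update v i v₀ j))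
          = Set.range (Function.update e i u) from by rw [hupdate_cast], hspan]
    -- sum over updated family in terms of the basis e
    have hsum_update : ∀ g : Fin d → ℚ, ∑ j, g j • Function.update e i u j
        = ∑ l, (g i * c l + if l = i then 0 else g l) • e l := by
      intro g
      have h1 : ∀ j, g j • Function.update e i u j
          = Function.update (fun j => g j • e j) i (g i • u) j := by
        intro j
        rcases eq_or_ne j i with rfl | hj
        · simp
        · simp [Function.update_of_ne hj]
      simp_rw [h1]
      rw [Finset.sum_update_of_mem (Finset.mem_univ i)]
      have h2 : ∑ l, (g i * c l + if l = i then 0 else g l) • e l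
          = g i • u + ∑ j ∈ Finset.univ.erase i, g j • e j := by
        simp_rw [add_smul, Finset.sum_add_distrib]
        congr 1
        · rw [hu2, Finset.smul_sum]
          exact Finset.sum_congr rfl fun l _ => mul_smul _ _ _
        · have hterm : ∀ l ∈ Finset.univ.erase i, (if l = i then 0 else g l) • e l = g l • e l :=
            fun l hl => by rw [if_neg (Finset.ne_of_mem_erase hl)]
          rw [← Finset.add_sum_erase _ (fun l => (if l = i then 0 else g l) • e l)
            (Finset.mem_univ i), Finset.sum_congr rfl hterm]
          simp
      rw [h2, Finset.sdiff_singleton_eq_erase]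
    -- membership characterization for Ai
    have memAi_iff : ∀ k : ℤ, k • (v i) ∈ Ai ↔
        ∃ a : ℤ, (k : ℚ) = a * c i ∧ ∀ j, j ≠ i → ∃ m : ℤ, (a : ℚ) * c j = m := by
      intro k
      rw [hAi, MultAux.mem_closure_iff]
      constructor
      · rintro ⟨b, hb⟩
        have hcast : ∑ l, ((b i : ℚ) * c l + if l = i then 0 else (b l : ℚ)) • e l
            = ∑ l, (if l = i then (k : ℚ) else 0) • e l := by
          rw [← hsum_update (fun j => (b j : ℚ))]
          have hb2 := congrArg (castHom n) hb
          rw [MultAux.cast_sum_smul, map_zsmul] at hb2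
          calc ∑ j, (b j : ℚ) • Function.update e i u j
              = k • castHom n (v i) := by
                rw [← hb2]
                exact Finset.sum_congr rfl fun j _ => by
                  rw [← congrFun hupdate_cast j]
            _ = ∑ l, (if l = i then (k : ℚ) else 0) • e l := by
                simp only [ite_smul, zero_smul, Finset.sum_ite_eq', Finset.mem_univ, if_pos]
                rw [Int.cast_smul_eq_zsmul]
        have H := congrFun (coeff_eq _ _ hcast)
        refine ⟨b i, ?_, ?_⟩
        · have h3 := H i
          simp only [if_pos, if_true, eq_self_iff_true, add_zero] at h3
          linarith [h3]
        · intro j hj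
          have := H j
          simp only [if_neg hj] at this
          refine ⟨-(b j), ?_⟩
          push_cast
          linarith [this]
      · rintro ⟨a, hk, hm⟩
        choose m hm using hm
        refine ⟨fun j => if h : j = i then a else -(m j h), MultAux.castHom_injective n ?_⟩
        rw [MultAux.cast_sum_smul, map_zsmul]
        calc ∑ j, ((if h : j = i then a else -(m j h) : ℤ) : ℚ) • castHom n
              (Function.update v i v₀ j)
            = ∑ j, ((if h : j = i then a else -(m j h) : ℤ) : ℚ) • Function.update e i u j := by
              exact Finset.sum_congr rfl fun j _ => by rw [congrFun hupdate_cast j]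
          _ = ∑ l, (((if h : (i:Fin d) = i then a else -(m i h) : ℤ) : ℚ) * c l
                + if l = i then 0 else ((if h : l = i then a else -(m l h) : ℤ) : ℚ)) • e l :=
              hsum_update _
          _ = ∑ l, (if l = i then (k : ℚ) else 0) • e l := by
              refine Finset.sum_congr rfl fun l _ => ?_
              congr 1
              rcases eq_or_ne l i with rfl | hl
              · simp [hk]
              · simp only [dif_pos rfl, if_neg hl, dif_neg hl]
                push_cast
                have := hm l hl
                linarith [this]
          _ = (k : ℚ) • e i := by
              simp only [ite_smul, zero_smul, Finset.sum_ite_eq', Finset.mem_univ, if_pos]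
          _ = k • castHom n (v i) := Int.cast_smul_eq_zsmul ℚ k (e i)
    -- qi
    obtain ⟨qi, hqi⟩ := hqint i
    have hqipos : 0 < qi := by
      have h0 : (0 : ℚ) < qi := by
        rw [← hqi]
        have : (0:ℚ) < (q:ℚ) := by exact_mod_cast hqpos
        exact mul_pos this (hc i)
      exact_mod_cast h0
    have Sdvd_i : ∀ k : ℤ,
        (∃ a : ℤ, (k : ℚ) = a * c i ∧ ∀ j, j ≠ i → ∃ m : ℤ, (a : ℚ) * c j = m) ↔ qi ∣ k := by
      intro k
      constructor
      · rintro ⟨a, hk, hm⟩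
        have ha : ∀ j, ∃ m : ℤ, (a : ℚ) * c j = m := by
          intro j
          rcases eq_or_ne j i with rfl | hj
          · exact ⟨k, hk.symm⟩
          · exact hm j hj
        obtain ⟨t, rfl⟩ := (Sdvd a).mp ha
        refine ⟨t, ?_⟩
        have h1 : (k : ℚ) = ((qi * t : ℤ) : ℚ) := by
          push_cast
          rw [hk]
          push_cast
          linear_combination (t : ℚ) * hqi
        exact_mod_cast h1
      · rintro ⟨t, rfl⟩
        refine ⟨q * t, ?_, ?_⟩
        · push_cast
          linear_combination (-(t : ℚ)) * hqi
        · intro j hj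
          obtain ⟨w, hw⟩ := hqint j
          refine ⟨w * t, ?_⟩
          push_cast
          linear_combination (t : ℚ) * hw
    -- B = Ai ⊔ closure {v i}
    have hBi : B = Ai ⊔ AddSubgroup.closure {v i} := by
      apply le_antisymm
      · rw [hB]
        refine sup_le ?_ ?_
        · rw [hA, AddSubgroup.closure_le]
          rintro x ⟨j, rfl⟩
          rcases eq_or_ne j i with rfl | hj
          · exact AddSubgroup.mem_sup_right (AddSubgroup.subset_closure rfl)
          · exact AddSubgroup.mem_sup_left
              (AddSubgroup.subset_closure ⟨j, Function.update_of_ne hj _ _⟩)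
        · rw [AddSubgroup.closure_le, Set.singleton_subset_iff]
          exact AddSubgroup.mem_sup_left
            (AddSubgroup.subset_closure ⟨i, Function.update_self _ _ _⟩)
      · refine sup_le ?_ ?_
        · rw [hAi, AddSubgroup.closure_le]
          rintro x ⟨j, rfl⟩
          rcases eq_or_ne j i with rfl | hj
          · rw [Function.update_self]
            exact AddSubgroup.mem_sup_right (AddSubgroup.subset_closure rfl)
          · rw [Function.update_of_ne hj]
            exact AddSubgroup.mem_sup_left (AddSubgroup.subset_closure ⟨j, rfl⟩)
        · rw [AddSubgroup.closure_le, Set.singleton_subset_iff]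
          exact AddSubgroup.mem_sup_left (AddSubgroup.subset_closure ⟨i, rfl⟩)
    have hAiB : Ai ≤ B := hBi ▸ le_sup_left
    have hordi : addOrderOf ((QuotientAddGroup.mk' Ai) (v i)) = qi.toNat := by
      refine MultAux.order_of_char _ _ (by omega) fun k => ?_
      rw [← map_zsmul, QuotientAddGroup.mk'_apply, QuotientAddGroup.eq_zero_iff, memAi_iff,
        Sdvd_i]
      rw [Int.toNat_of_nonneg hqipos.le]
    have hreli : Ai.relIndex B = qi.toNat := by
      rw [hBi, MultAux.relindex_sup_closure_singleton, hordi]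
    have hmi : coneMult (Function.update v i v₀) = qi.toNat * r := by
      rw [hconei, ← AddSubgroup.relIndex_mul_relIndex Ai B L hAiB hBL, hreli]
    rw [hmi, hm0]
    have hqic : ((qi.toNat : ℕ) : ℚ) = (qi : ℚ) := by
      exact_mod_cast congrArg (fun z : ℤ => (z : ℚ)) (Int.toNat_of_nonneg hqipos.le)
    push_cast
    rw [hqic, ← hqi]
    ring
  refine ⟨part1, ?_⟩
  apply MultAux.castHom_injective n
  have part1' : ∀ i, ((coneMult (Function.update v i v₀) : ℤ) : ℚ)
      = c i * (coneMult v : ℚ) := by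
    intro i
    push_cast
    exact part1 i
  calc castHom n ((coneMult v : ℤ) • v₀)
      = ∑ i, (c i * (coneMult v : ℚ)) • e i := by
        rw [map_zsmul, ← Int.cast_smul_eq_zsmul ℚ, show castHom n v₀ = u from rfl, hu2,
          Finset.smul_sum]
        refine Finset.sum_congr rfl fun i _ => ?_
        rw [smul_smul]
        congr 1
        push_cast
        ring
    _ = castHom n (∑ i, (coneMult (Function.update v i v₀) : ℤ) • v i) := by
        rw [MultAux.cast_sum_smul]
        exact Finset.sum_congr rfl fun i _ => by rw [part1' i]
end
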